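/- arXiv:2507.14522 — 10 statements merged into one kernel-verified Lean document; each statement's English description precedes it below -/
import Mathlib

section
/- Let c : ℝ → ℝ and let u : ℝ × ℝ → ℝ be twice continuously differentiable on {(x,t) : x ≠ 0} and satisfy the wave equation ∂²u/∂t²(x,t) = c(x)² · ∂²u/∂x²(x,t) for all x ≠ 0 and all t. Define σ : ℝ × ℝ → ℝ by σ(X,t) = −X · u(−1/X, t) for X ≠ 0. Then σ satisfies ∂²σ/∂t²(X,t) = X⁴ · c(−1/X)² · ∂²σ/∂X²(X,t) for all X ≠ 0 and all t. -/
/-!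
For fixed `t`, the time derivatives of `σ` are those of `u` at `-1/X` multiplied by `-X`. In space,
the chain rule gives `d²/dX² [-X g(-1/X)] = -g''(-1/X) / X³` for `g = u(·, t)`: the prefactor `-X`
is exactly what makes the first-order terms cancel. Hence
`σ_tt = -X u_tt = -X c² u_xx = X⁴ c(-1/X)² σ_XX`.
-/

/-- First partial derivative with respect to the first argument. -/
noncomputable def pdx (u : ℝ × ℝ → ℝ) : ℝ × ℝ → ℝ :=
  fun p => deriv (fun x => u (x, p.2)) p.1

/-- First partial derivative with respect to the second argument. -/
noncomputable def pdt (u : ℝ × ℝ → ℝ) : ℝ × ℝ → ℝ :=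
  fun p => deriv (fun t => u (p.1, t)) p.2

open Filter Topology

lemma pdx_pdx_apply (u : ℝ × ℝ → ℝ) (x t : ℝ) :
    pdx (pdx u) (x, t) = deriv (deriv fun y => u (y, t)) x := rfl

lemma pdt_pdt_apply (u : ℝ × ℝ → ℝ) (x t : ℝ) :
    pdt (pdt u) (x, t) = deriv (deriv fun s => u (x, s)) t := rfl

lemma hasDerivAt_neg_one_div {x : ℝ} (hx : x ≠ 0) :
    HasDerivAt (fun y : ℝ => -1 / y) (1 / x ^ 2) x := by
  simpa [neg_div, one_div] using (hasDerivAt_inv hx).fun_neg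

lemma HasDerivAt.comp_neg_one_div {g : ℝ → ℝ} {g' x : ℝ} (hx : x ≠ 0)
    (hg : HasDerivAt g g' (-1 / x)) :
    HasDerivAt (fun y => g (-1 / y)) (g' / x ^ 2) x := by
  have h := hg.comp x (hasDerivAt_neg_one_div hx)
  rw [mul_one_div] at h
  exact h

lemma hasDerivAt_neg_mul_comp_neg_one_div {g : ℝ → ℝ} {x : ℝ} (hx : x ≠ 0)
    (hg : DifferentiableAt ℝ g (-1 / x)) :
    HasDerivAt (fun y => -y * g (-1 / y)) (-g (-1 / x) - deriv g (-1 / x) / x) x := by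
  refine ((hasDerivAt_neg' x).fun_mul (hg.hasDerivAt.comp_neg_one_div hx)).congr_deriv ?_
  field_simp
  ring

lemma deriv_deriv_neg_mul_comp_neg_one_div {g : ℝ → ℝ} {X : ℝ} (hX : X ≠ 0)
    (hg : ContDiffAt ℝ 2 g (-1 / X)) :
    deriv (deriv fun y => -y * g (-1 / y)) X = -deriv (deriv g) (-1 / X) / X ^ 3 := by
  have hg_near : ∀ᶠ x in 𝓝 X, x ≠ 0 ∧ DifferentiableAt ℝ g (-1 / x) := by
    have hcont : ContinuousAt (fun y : ℝ => -1 / y) X :=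
      (hasDerivAt_neg_one_div hX).continuousAt
    refine (eventually_ne_nhds hX).and (hcont.eventually ?_)
    exact (hg.eventually (by simp)).mono fun y hy => hy.differentiableAt (by norm_num)
  have hderiv : deriv (fun y => -y * g (-1 / y)) =ᶠ[𝓝 X]
      fun x => -g (-1 / x) - deriv g (-1 / x) / x :=
    hg_near.mono fun x ⟨hx, hgx⟩ => (hasDerivAt_neg_mul_comp_neg_one_div hx hgx).deriv
  have hg' : DifferentiableAt ℝ (deriv g) (-1 / X) :=
    (hg.derivWithin (m := 1) (by norm_num)).differentiableAt (by norm_num)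
  have h := ((hg.differentiableAt (by norm_num)).hasDerivAt.comp_neg_one_div hX).fun_neg.fun_sub
    ((hg'.hasDerivAt.comp_neg_one_div hX).fun_div (hasDerivAt_id' X) hX)
  rw [hderiv.deriv_eq, h.deriv]
  field_simp
  ring

theorem stmt_0 (c : ℝ → ℝ) (u σ : ℝ × ℝ → ℝ)
    (hu : ContDiffOn ℝ 2 u {p : ℝ × ℝ | p.1 ≠ 0})
    (hwave : ∀ x t : ℝ, x ≠ 0 →
      pdt (pdt u) (x, t) = (c x) ^ 2 * pdx (pdx u) (x, t))
    (hσ : ∀ X t : ℝ, X ≠ 0 → σ (X, t) = -X * u (-1 / X, t)) :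
    ∀ X t : ℝ, X ≠ 0 →
      pdt (pdt σ) (X, t) = X ^ 4 * (c (-1 / X)) ^ 2 * pdx (pdx σ) (X, t) := by
  intro X t hX
  have hX' : -1 / X ≠ 0 := by simp [hX]
  have hσ_time : (fun s => σ (X, s)) = fun s => -X * u (-1 / X, s) := funext (hσ X · hX)
  have hσ_space : (fun y => σ (y, t)) =ᶠ[𝓝 X] fun y => -y * u (-1 / y, t) :=
    eventually_of_mem (isOpen_ne.mem_nhds hX) (hσ · t ·)
  have hu_slice : ContDiffAt ℝ 2 (fun x => u (x, t)) (-1 / X) :=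
    (hu.contDiffAt ((isOpen_ne.preimage continuous_fst).mem_nhds hX')).comp _
      (contDiffAt_id.prodMk contDiffAt_const)
  have htime : pdt (pdt σ) (X, t) = -X * pdt (pdt u) (-1 / X, t) := by
    simp only [pdt_pdt_apply, hσ_time, deriv_const_mul_field']
  have hspace : pdx (pdx σ) (X, t) = -pdx (pdx u) (-1 / X, t) / X ^ 3 := by
    rw [pdx_pdx_apply, hσ_space.deriv.deriv_eq, deriv_deriv_neg_mul_comp_neg_one_div hX hu_slice,
      pdx_pdx_apply]
  rw [htime, hspace, hwave _ t hX']
  field_simp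
end

section
/- Let c : ℝ → ℝ and let u : ℝ × ℝ → ℝ be twice continuously differentiable on {(x,t) : t ≠ 0} and satisfy the wave equation ∂²u/∂t²(x,t) = c(x)² · ∂²u/∂x²(x,t) for all x and all t ≠ 0. Define σ : ℝ × ℝ → ℝ by σ(x,T) = −T · u(x, −1/T) for T ≠ 0. Then σ satisfies ∂²σ/∂T²(x,T) = T⁻⁴ · c(x)² · ∂²σ/∂x²(x,T) for all x and all T ≠ 0. -/
open Filter Topology

lemma hasDerivAt_neg_one_div_s1 {s : ℝ} (hs : s ≠ 0) :
    HasDerivAt (fun s : ℝ => -1 / s) (s ^ 2)⁻¹ s := by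
  simpa [neg_div, one_div] using (hasDerivAt_inv hs).fun_neg

lemma hasDerivAt_neg_mul_comp_neg_one_div_s1 {f : ℝ → ℝ} {f' s : ℝ} (hs : s ≠ 0)
    (hf : HasDerivAt f f' (-1 / s)) :
    HasDerivAt (fun s => -s * f (-1 / s)) (-f (-1 / s) - s⁻¹ * f') s := by
  have hcomp : HasDerivAt (fun s => f (-1 / s)) (f' * (s ^ 2)⁻¹) s :=
    hf.comp s (hasDerivAt_neg_one_div_s1 hs)
  refine ((hasDerivAt_id' s).fun_neg.fun_mul hcomp).congr_deriv ?_
  field_simp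
  ring

lemma deriv_deriv_neg_mul_comp_neg_one_div_s1 {f : ℝ → ℝ} {T : ℝ} (hT : T ≠ 0)
    (hf : ∀ᶠ t in 𝓝 (-1 / T), DifferentiableAt ℝ f t)
    (hf' : DifferentiableAt ℝ (deriv f) (-1 / T)) :
    deriv (deriv fun s => -s * f (-1 / s)) T = -(T ^ 3)⁻¹ * deriv (deriv f) (-1 / T) := by
  have hfirst : deriv (fun s => -s * f (-1 / s)) =ᶠ[𝓝 T]
      fun s => -f (-1 / s) - s⁻¹ * deriv f (-1 / s) := by
    filter_upwards [(hasDerivAt_neg_one_div_s1 hT).continuousAt.tendsto.eventually hf,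
      eventually_ne_nhds hT] with s hfs hs
    exact (hasDerivAt_neg_mul_comp_neg_one_div_s1 hs hfs.hasDerivAt).deriv
  have hcomp : HasDerivAt (fun s => f (-1 / s)) (deriv f (-1 / T) * (T ^ 2)⁻¹) T :=
    hf.self_of_nhds.hasDerivAt.comp T (hasDerivAt_neg_one_div_s1 hT)
  have hcomp' : HasDerivAt (fun s => deriv f (-1 / s)) (deriv (deriv f) (-1 / T) * (T ^ 2)⁻¹) T :=
    hf'.hasDerivAt.comp T (hasDerivAt_neg_one_div_s1 hT)
  have hsecond := hcomp.fun_neg.fun_sub ((hasDerivAt_inv hT).fun_mul hcomp')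
  rw [hfirst.deriv_eq, hsecond.deriv]
  field_simp
  ring

lemma pdx_of_eq_const_mul {u σ : ℝ × ℝ → ℝ} {a t T : ℝ} (h : ∀ y, σ (y, T) = a * u (y, t))
    (x : ℝ) : pdx σ (x, T) = a * pdx u (x, t) := by
  simp only [pdx, h, deriv_const_mul_field']

lemma pdx_pdx_of_eq_const_mul {u σ : ℝ × ℝ → ℝ} {a t T : ℝ}
    (h : ∀ y, σ (y, T) = a * u (y, t)) (x : ℝ) :
    pdx (pdx σ) (x, T) = a * pdx (pdx u) (x, t) :=
  pdx_of_eq_const_mul (pdx_of_eq_const_mul h) x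

lemma pdt_pdt_of_eventuallyEq {σ : ℝ × ℝ → ℝ} {g : ℝ → ℝ} {x T : ℝ}
    (h : (fun s => σ (x, s)) =ᶠ[𝓝 T] g) : pdt (pdt σ) (x, T) = deriv (deriv g) T :=
  h.deriv.deriv_eq

lemma ContDiffOn.eventually_differentiableAt_and_differentiableAt_deriv {f : ℝ → ℝ}
    {s : Set ℝ} (hs : IsOpen s) (hf : ContDiffOn ℝ 2 f s) {t : ℝ} (ht : t ∈ s) :
    (∀ᶠ t' in 𝓝 t, DifferentiableAt ℝ f t') ∧ DifferentiableAt ℝ (deriv f) t := by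
  obtain ⟨hfd, -, hf'⟩ := (contDiffOn_succ_iff_deriv_of_isOpen (n := 1) hs).1 hf
  exact ⟨eventually_of_mem (hs.mem_nhds ht) fun t' ht' => hfd.differentiableAt (hs.mem_nhds ht'),
    (hf'.differentiableOn one_ne_zero).differentiableAt (hs.mem_nhds ht)⟩

theorem stmt_1 (c : ℝ → ℝ) (u σ : ℝ × ℝ → ℝ)
    (hu : ContDiffOn ℝ 2 u {p : ℝ × ℝ | p.2 ≠ 0})
    (hwave : ∀ x t : ℝ, t ≠ 0 →
      pdt (pdt u) (x, t) = (c x) ^ 2 * pdx (pdx u) (x, t))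
    (hσ : ∀ x T : ℝ, T ≠ 0 → σ (x, T) = -T * u (x, -1 / T)) :
    ∀ x T : ℝ, T ≠ 0 →
      pdt (pdt σ) (x, T) = (T ^ 4)⁻¹ * (c x) ^ 2 * pdx (pdx σ) (x, T) := by
  intro x T hT
  have hmT : -1 / T ≠ 0 := by simpa [neg_div] using hT
  have hline : ContDiffOn ℝ 2 (fun t => u (x, t)) {t | t ≠ 0} :=
    hu.comp (contDiff_const.prodMk contDiff_id).contDiffOn fun _ ht => ht
  obtain ⟨hdiff, hdiff'⟩ :=
    hline.eventually_differentiableAt_and_differentiableAt_deriv isOpen_ne hmT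
  have htime : pdt (pdt σ) (x, T) = -(T ^ 3)⁻¹ * pdt (pdt u) (x, -1 / T) := by
    rw [pdt_pdt_of_eventuallyEq (g := fun s => -s * u (x, -1 / s))
      (eventually_ne_nhds hT |>.mono fun s hs => hσ x s hs)]
    exact deriv_deriv_neg_mul_comp_neg_one_div_s1 hT hdiff hdiff'
  have hspace : pdx (pdx σ) (x, T) = -T * pdx (pdx u) (x, -1 / T) :=
    pdx_pdx_of_eq_const_mul (fun y => hσ y T hT) x
  rw [htime, hspace, hwave x _ hmT]
  field_simp
end

section
/- Let c : ℝ × ℝ → ℝ, and let u, f : ℝ × ℝ → ℝ be twice continuously differentiable functions each satisfying the wave equation ∂²w/∂t²(x,t) = c(x,t)² · ∂²w/∂x²(x,t) for all (x,t), with f(x,t) ≠ 0 for all (x,t). Define U = u/f. Then U satisfies 2·(∂f/∂t)·(∂U/∂t) + f·(∂²U/∂t²) = c(x,t)² · ( 2·(∂f/∂x)·(∂U/∂x) + f·(∂²U/∂x²) ) for all (x,t). -/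
theorem deriv_deriv_mul {𝕜 𝔸 : Type*} [NontriviallyNormedField 𝕜] [NormedRing 𝔸]
    [NormedAlgebra 𝕜 𝔸] {g h : 𝕜 → 𝔸} {x : 𝕜} (hg : ContDiffAt 𝕜 2 g x)
    (hh : ContDiffAt 𝕜 2 h x) :
    deriv (deriv (g * h)) x
      = g x * deriv (deriv h) x + 2 * deriv g x * deriv h x + deriv (deriv g) x * h x := by
  have leibniz := iteratedDerivWithin_mul (Set.mem_univ x) uniqueDiffOn_univ
    (contDiffWithinAt_univ.mpr hg) (contDiffWithinAt_univ.mpr hh)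
  simpa [iteratedDerivWithin_univ, Finset.sum_range_succ, iteratedDeriv_succ] using leibniz

theorem pdt_pdt_mul {f g : ℝ × ℝ → ℝ} {p : ℝ × ℝ} (hf : ContDiffAt ℝ 2 f p)
    (hg : ContDiffAt ℝ 2 g p) :
    pdt (pdt (f * g)) p = f p * pdt (pdt g) p + 2 * pdt f p * pdt g p + pdt (pdt f) p * g p := by
  obtain ⟨x, t⟩ := p
  have hslice : ContDiffAt ℝ 2 (fun s : ℝ => (x, s)) t := contDiffAt_const.prodMk contDiffAt_id
  exact deriv_deriv_mul (hf.comp t hslice) (hg.comp t hslice)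

theorem pdx_pdx_mul {f g : ℝ × ℝ → ℝ} {p : ℝ × ℝ} (hf : ContDiffAt ℝ 2 f p)
    (hg : ContDiffAt ℝ 2 g p) :
    pdx (pdx (f * g)) p = f p * pdx (pdx g) p + 2 * pdx f p * pdx g p + pdx (pdx f) p * g p := by
  obtain ⟨x, t⟩ := p
  have hslice : ContDiffAt ℝ 2 (fun s : ℝ => (s, t)) x := contDiffAt_id.prodMk contDiffAt_const
  exact deriv_deriv_mul (hf.comp x hslice) (hg.comp x hslice)

theorem stmt_3 (c : ℝ × ℝ → ℝ) (u f U : ℝ × ℝ → ℝ)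
    (hu : ContDiff ℝ 2 u) (hf : ContDiff ℝ 2 f)
    (hwaveu : ∀ x t : ℝ, pdt (pdt u) (x, t) = (c (x, t)) ^ 2 * pdx (pdx u) (x, t))
    (hwavef : ∀ x t : ℝ, pdt (pdt f) (x, t) = (c (x, t)) ^ 2 * pdx (pdx f) (x, t))
    (hfne : ∀ p : ℝ × ℝ, f p ≠ 0)
    (hU : ∀ p : ℝ × ℝ, U p = u p / f p) :
    ∀ x t : ℝ,
      2 * pdt f (x, t) * pdt U (x, t) + f (x, t) * pdt (pdt U) (x, t)
        = (c (x, t)) ^ 2 *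
          (2 * pdx f (x, t) * pdx U (x, t) + f (x, t) * pdx (pdx U) (x, t)) := by
  have hUdiff : ContDiff ℝ 2 U := by
    rw [show U = fun p => u p / f p from funext hU]
    exact hu.div hf hfne
  have hu_eq : u = f * U := funext fun p => by rw [Pi.mul_apply, hU, mul_div_cancel₀ _ (hfne p)]
  intro x t
  have hwaveU := hwaveu x t
  rw [hu_eq, pdt_pdt_mul hf.contDiffAt hUdiff.contDiffAt,
    pdx_pdx_mul hf.contDiffAt hUdiff.contDiffAt] at hwaveU
  linear_combination hwaveU - U (x, t) * hwavef x t
end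

section
/- Let c : ℝ → ℝ and let u : ℝ × ℝ → ℝ be three times continuously differentiable on {(x,t) : t ≠ 0} and satisfy the wave equation ∂²u/∂t²(x,t) = c(x)² · ∂²u/∂x²(x,t) for all x and all t ≠ 0. Define β(x,t) = ( t · ∂u/∂t(x,t) − u(x,t) ) / t², i.e. β = ∂/∂t (u/t). Then β satisfies the scalar linear PDE ∂/∂t ( t⁻² · ∂/∂t ( t² β(x,t) ) ) = c(x)² · ∂²β/∂x²(x,t) for all x and all t ≠ 0. -/
/-!
On `t ≠ 0` we have `t² β = t ∂ₜu - u`, whose `t`-derivative is `t ∂ₜ²u = c² t ∂ₓ²u` by the wave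
equation. Hence `t⁻² ∂ₜ(t² β) = c² t⁻¹ ∂ₓ²u`, and differentiating once more in `t` gives
`c² (t⁻¹ ∂ₜ∂ₓ²u - t⁻² ∂ₓ²u)`. On the other side, `β` is a combination of `∂ₜu` and `u` with
coefficients depending on `t` only, so `∂ₓ²β = t⁻¹ ∂ₓ²∂ₜu - t⁻² ∂ₓ²u`. The two agree because
the third-order mixed partials of a `C³` function commute.
-/

open Filter Topology

section PartialDerivatives

variable {f g : ℝ × ℝ → ℝ} {p : ℝ × ℝ} {f' : ℝ × ℝ →L[ℝ] ℝ}

theorem HasFDerivAt.hasDerivAt_pdx_slice (hf : HasFDerivAt f f' p) :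
    HasDerivAt (fun y => f (y, p.2)) (f' (1, 0)) p.1 :=
  hf.comp_hasDerivAt p.1 ((hasDerivAt_id p.1).prodMk (hasDerivAt_const p.1 p.2))

theorem HasFDerivAt.hasDerivAt_pdt_slice (hf : HasFDerivAt f f' p) :
    HasDerivAt (fun t => f (p.1, t)) (f' (0, 1)) p.2 :=
  hf.comp_hasDerivAt p.2 ((hasDerivAt_const p.2 p.1).prodMk (hasDerivAt_id p.2))

theorem HasFDerivAt.pdx_eq (hf : HasFDerivAt f f' p) : pdx f p = f' (1, 0) :=
  hf.hasDerivAt_pdx_slice.deriv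

theorem HasFDerivAt.pdt_eq (hf : HasFDerivAt f f' p) : pdt f p = f' (0, 1) :=
  hf.hasDerivAt_pdt_slice.deriv

theorem DifferentiableAt.hasDerivAt_pdx (hf : DifferentiableAt ℝ f p) :
    HasDerivAt (fun y => f (y, p.2)) (pdx f p) p.1 := by
  rw [hf.hasFDerivAt.pdx_eq]
  exact hf.hasFDerivAt.hasDerivAt_pdx_slice

theorem DifferentiableAt.hasDerivAt_pdt (hf : DifferentiableAt ℝ f p) :
    HasDerivAt (fun t => f (p.1, t)) (pdt f p) p.2 := by
  rw [hf.hasFDerivAt.pdt_eq]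
  exact hf.hasFDerivAt.hasDerivAt_pdt_slice

theorem Filter.EventuallyEq.pdx_eq (h : f =ᶠ[𝓝 p] g) : pdx f p = pdx g p :=
  (h.comp_tendsto ((continuous_id.prodMk continuous_const).tendsto p.1)).deriv_eq

theorem Filter.EventuallyEq.pdt_eq (h : f =ᶠ[𝓝 p] g) : pdt f p = pdt g p :=
  (h.comp_tendsto ((continuous_const.prodMk continuous_id).tendsto p.2)).deriv_eq

theorem ContDiffAt.eventually_hasFDerivAt {n : WithTop ℕ∞} (hf : ContDiffAt ℝ n f p)
    (hn : 1 ≤ n) : ∀ᶠ q in 𝓝 p, HasFDerivAt f (fderiv ℝ f q) q :=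
  ((hf.of_le hn).eventually (by simp)).mono fun _ hq =>
    (hq.differentiableAt one_ne_zero).hasFDerivAt

theorem ContDiffAt.contDiffAt_pdx {m n : WithTop ℕ∞} (hf : ContDiffAt ℝ n f p)
    (hmn : m + 1 ≤ n) : ContDiffAt ℝ m (pdx f) p :=
  ((hf.fderiv_right hmn).clm_apply contDiffAt_const).congr_of_eventuallyEq <|
    (hf.eventually_hasFDerivAt (le_add_self.trans hmn)).mono fun _ hq => hq.pdx_eq

theorem ContDiffAt.contDiffAt_pdt {m n : WithTop ℕ∞} (hf : ContDiffAt ℝ n f p)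
    (hmn : m + 1 ≤ n) : ContDiffAt ℝ m (pdt f) p :=
  ((hf.fderiv_right hmn).clm_apply contDiffAt_const).congr_of_eventuallyEq <|
    (hf.eventually_hasFDerivAt (le_add_self.trans hmn)).mono fun _ hq => hq.pdt_eq

theorem ContDiffAt.pdx_pdt_comm (hf : ContDiffAt ℝ 2 f p) : pdx (pdt f) p = pdt (pdx f) p := by
  have hf' := hf.eventually_hasFDerivAt one_le_two
  have hf'' : HasFDerivAt (fderiv ℝ f) (fderiv ℝ (fderiv ℝ f) p) p :=
    ((hf.fderiv_right le_rfl).differentiableAt one_ne_zero).hasFDerivAt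
  have hpdt : pdt f =ᶠ[𝓝 p] fun q => fderiv ℝ f q (0, 1) := hf'.mono fun _ hq => hq.pdt_eq
  have hpdx : pdx f =ᶠ[𝓝 p] fun q => fderiv ℝ f q (1, 0) := hf'.mono fun _ hq => hq.pdx_eq
  rw [hpdt.pdx_eq, hpdx.pdt_eq, (hf''.clm_apply (hasFDerivAt_const _ p)).pdx_eq,
    (hf''.clm_apply (hasFDerivAt_const _ p)).pdt_eq]
  simpa using second_derivative_symmetric_of_eventually hf' hf'' (1, 0) (0, 1)

theorem ContDiffAt.pdx_pdx_pdt_comm (hf : ContDiffAt ℝ 3 f p) :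
    pdx (pdx (pdt f)) p = pdt (pdx (pdx f)) p := by
  have hcomm : pdx (pdt f) =ᶠ[𝓝 p] pdt (pdx f) :=
    (hf.eventually (by simp)).mono fun _ hq => (hq.of_le (by norm_num)).pdx_pdt_comm
  rw [hcomm.pdx_eq, (hf.contDiffAt_pdx (m := 2) (by norm_num)).pdx_pdt_comm]

theorem pdx_eq_mul_add_mul {v w : ℝ × ℝ → ℝ} {x t a b : ℝ}
    (hf : ∀ y, f (y, t) = a * v (y, t) + b * w (y, t))
    (hv : DifferentiableAt ℝ v (x, t)) (hw : DifferentiableAt ℝ w (x, t)) :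
    pdx f (x, t) = a * pdx v (x, t) + b * pdx w (x, t) := by
  simp only [pdx, hf]
  exact ((hv.hasDerivAt_pdx.const_mul a).add (hw.hasDerivAt_pdx.const_mul b)).deriv

end PartialDerivatives

section WaveEquation

variable {u β : ℝ × ℝ → ℝ}

theorem pdt_sq_mul_of_eq_div_sq {x s : ℝ} (hs : s ≠ 0)
    (hβ : ∀ t, t ≠ 0 → β (x, t) = (t * pdt u (x, t) - u (x, t)) / t ^ 2)
    (hu : DifferentiableAt ℝ u (x, s)) (hu' : DifferentiableAt ℝ (pdt u) (x, s)) :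
    pdt (fun q => q.2 ^ 2 * β q) (x, s) = s * pdt (pdt u) (x, s) := by
  have hev : (fun t => t ^ 2 * β (x, t)) =ᶠ[𝓝 s] fun t => t * pdt u (x, t) - u (x, t) := by
    filter_upwards [eventually_ne_nhds hs] with t ht
    rw [hβ t ht]
    field_simp
  have hd : HasDerivAt (fun t => t * pdt u (x, t) - u (x, t))
      (1 * pdt u (x, s) + s * pdt (pdt u) (x, s) - pdt u (x, s)) s :=
    ((hasDerivAt_id s).mul hu'.hasDerivAt_pdt).sub hu.hasDerivAt_pdt
  calc pdt (fun q => q.2 ^ 2 * β q) (x, s)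
      = deriv (fun t => t * pdt u (x, t) - u (x, t)) s := hev.deriv_eq
    _ = s * pdt (pdt u) (x, s) := by rw [hd.deriv]; ring

theorem pdt_inv_sq_mul_pdt_sq_mul_of_wave {k x t : ℝ} (ht : t ≠ 0)
    (hu : ∀ s, s ≠ 0 → ContDiffAt ℝ 3 u (x, s))
    (hwave : ∀ s, s ≠ 0 → pdt (pdt u) (x, s) = k * pdx (pdx u) (x, s))
    (hβ : ∀ s, s ≠ 0 → β (x, s) = (s * pdt u (x, s) - u (x, s)) / s ^ 2) :
    pdt (fun p => (p.2 ^ 2)⁻¹ * pdt (fun q => q.2 ^ 2 * β q) p) (x, t)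
      = k * (t⁻¹ * pdt (pdx (pdx u)) (x, t) - (t ^ 2)⁻¹ * pdx (pdx u) (x, t)) := by
  have hev : (fun s => (s ^ 2)⁻¹ * pdt (fun q => q.2 ^ 2 * β q) (x, s)) =ᶠ[𝓝 t]
      fun s => k * (s⁻¹ * pdx (pdx u) (x, s)) := by
    filter_upwards [eventually_ne_nhds ht] with s hs
    rw [pdt_sq_mul_of_eq_div_sq hs hβ ((hu s hs).differentiableAt (by norm_num))
      (((hu s hs).contDiffAt_pdt (m := 2) (by norm_num)).differentiableAt (by norm_num)),
      hwave s hs]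
    field_simp
  have huxx : DifferentiableAt ℝ (pdx (pdx u)) (x, t) :=
    (((hu t ht).contDiffAt_pdx (m := 2) (by norm_num)).contDiffAt_pdx (m := 1)
      (by norm_num)).differentiableAt (by norm_num)
  have hd : HasDerivAt (fun s => k * (s⁻¹ * pdx (pdx u) (x, s)))
      (k * (-(t ^ 2)⁻¹ * pdx (pdx u) (x, t) + t⁻¹ * pdt (pdx (pdx u)) (x, t))) t :=
    ((hasDerivAt_inv ht).mul huxx.hasDerivAt_pdt).const_mul k
  calc pdt (fun p => (p.2 ^ 2)⁻¹ * pdt (fun q => q.2 ^ 2 * β q) p) (x, t)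
      = deriv (fun s => k * (s⁻¹ * pdx (pdx u) (x, s))) t := hev.deriv_eq
    _ = _ := by rw [hd.deriv]; ring

theorem pdx_pdx_of_eq_div_sq {x t : ℝ} (ht : t ≠ 0) (hu : ∀ y, ContDiffAt ℝ 3 u (y, t))
    (hβ : ∀ y, β (y, t) = (t * pdt u (y, t) - u (y, t)) / t ^ 2) :
    pdx (pdx β) (x, t) = t⁻¹ * pdt (pdx (pdx u)) (x, t) - (t ^ 2)⁻¹ * pdx (pdx u) (x, t) := by
  have hut : ∀ y, ContDiffAt ℝ 2 (pdt u) (y, t) := fun y => (hu y).contDiffAt_pdt (by norm_num)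
  have hux : ∀ y, ContDiffAt ℝ 2 (pdx u) (y, t) := fun y => (hu y).contDiffAt_pdx (by norm_num)
  have hβ' : ∀ y, β (y, t) = t⁻¹ * pdt u (y, t) + -(t ^ 2)⁻¹ * u (y, t) := fun y => by
    rw [hβ]
    field_simp
    ring
  have hβx : ∀ y, pdx β (y, t) = t⁻¹ * pdx (pdt u) (y, t) + -(t ^ 2)⁻¹ * pdx u (y, t) :=
    fun y => pdx_eq_mul_add_mul hβ' ((hut y).differentiableAt (by norm_num))
      ((hu y).differentiableAt (by norm_num))
  rw [pdx_eq_mul_add_mul hβx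
    (((hut x).contDiffAt_pdx (m := 1) (by norm_num)).differentiableAt (by norm_num))
    ((hux x).differentiableAt (by norm_num)), (hu x).pdx_pdx_pdt_comm]
  ring

end WaveEquation

theorem stmt_5 (c : ℝ → ℝ) (u β : ℝ × ℝ → ℝ)
    (hu : ContDiffOn ℝ 3 u {p : ℝ × ℝ | p.2 ≠ 0})
    (hwave : ∀ x t : ℝ, t ≠ 0 →
      pdt (pdt u) (x, t) = (c x) ^ 2 * pdx (pdx u) (x, t))
    (hβ : ∀ x t : ℝ, t ≠ 0 →
      β (x, t) = (t * pdt u (x, t) - u (x, t)) / t ^ 2) :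
    ∀ x t : ℝ, t ≠ 0 →
      pdt (fun p => (p.2 ^ 2)⁻¹ * pdt (fun q => q.2 ^ 2 * β q) p) (x, t)
        = (c x) ^ 2 * pdx (pdx β) (x, t) := by
  intro x t ht
  have hu3 : ∀ y s, s ≠ 0 → ContDiffAt ℝ 3 u (y, s) := fun _ _ hs =>
    hu.contDiffAt ((isOpen_ne.preimage continuous_snd).mem_nhds hs)
  rw [pdt_inv_sq_mul_pdt_sq_mul_of_wave ht (hu3 x) (hwave x) (hβ x),
    pdx_pdx_of_eq_div_sq ht (fun y => hu3 y t ht) (fun y => hβ y t ht)]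
end

section
/- Let c : ℝ → ℝ and let B : ℝ × ℝ → ℝ be twice continuously differentiable on {(x,t) : t > 0} and satisfy (4/t) · ∂B/∂t(x,t) + ∂²B/∂t²(x,t) = c(x)² · ∂²B/∂x²(x,t) for all x and all t > 0. Define B̃ : ℝ × (0,∞) → ℝ by B̃(x,T) = B(x, 3 T^{−1/3}). Then B̃ satisfies ∂²B̃/∂T²(x,T) = T^{−8/3} · c(x)² · ∂²B̃/∂x²(x,T) for all x and all T > 0. -/
open Filter Topology Set

theorem hasDerivAt_deriv_comp {f g g' : ℝ → ℝ} {g'' s : ℝ} (hf : ContDiffAt ℝ 2 f (g s))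
    (hg : ∀ᶠ u in 𝓝 s, HasDerivAt g (g' u) u) (hg' : HasDerivAt g' g'' s) :
    HasDerivAt (deriv (f ∘ g))
      (deriv (deriv f) (g s) * g' s ^ 2 + deriv f (g s) * g'') s := by
  have hf_near : ∀ᶠ u in 𝓝 s, DifferentiableAt ℝ f (g u) :=
    hg.self_of_nhds.continuousAt.eventually
      ((hf.eventually (by simp)).mono fun y hy => hy.differentiableAt (by simp))
  have hchain : deriv (f ∘ g) =ᶠ[𝓝 s] fun u => deriv f (g u) * g' u := by
    filter_upwards [hf_near, hg] with u hfu hgu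
    exact (hfu.hasDerivAt.comp u hgu).deriv
  have hf' : HasDerivAt (deriv f) (deriv (deriv f) (g s)) (g s) :=
    ((hf.derivWithin (m := 1) (by norm_num)).differentiableAt (by simp)).hasDerivAt
  refine (((hf'.comp s hg.self_of_nhds).mul hg').congr_of_eventuallyEq hchain).congr_deriv ?_
  simp only [Function.comp_apply]
  ring

theorem pdt_pdt_eq_deriv_deriv {u : ℝ × ℝ → ℝ} {φ : ℝ → ℝ} {x t : ℝ}
    (h : (fun s => u (x, s)) =ᶠ[𝓝 t] φ) : pdt (pdt u) (x, t) = deriv (deriv φ) t :=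
  h.deriv.deriv_eq

theorem pdx_pdx_congr {u v : ℝ × ℝ → ℝ} {x t s : ℝ} (h : ∀ y, u (y, t) = v (y, s)) :
    pdx (pdx u) (x, t) = pdx (pdx v) (x, s) := by
  have hslice : (fun y => u (y, t)) = fun y => v (y, s) := funext h
  simp only [pdx, hslice]

theorem hasDerivAt_const_mul_rpow {a p T : ℝ} (hT : 0 < T) :
    HasDerivAt (fun s => a * s ^ p) (a * p * T ^ (p - 1)) T := by
  simpa [mul_assoc] using (Real.hasDerivAt_rpow_const (p := p) (Or.inl hT.ne')).const_mul a

/-- `g'² = T ^ (-8/3)` and `g'' = (4 / g) * g'²` for `g T = 3 * T ^ (-1/3)`, whose first and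
second derivatives appear here in the form `hasDerivAt_const_mul_rpow` produces. -/
theorem three_mul_rpow_neg_third_derivs {T : ℝ} (hT : 0 < T) :
    (-1 * T ^ (-(4 : ℝ) / 3)) ^ 2 = T ^ (-(8 : ℝ) / 3) ∧
      -1 * (-(4 : ℝ) / 3) * T ^ (-(4 : ℝ) / 3 - 1)
        = 4 / (3 * T ^ (-(1 : ℝ) / 3)) * T ^ (-(8 : ℝ) / 3) := by
  constructor
  · rw [neg_one_mul, neg_sq, ← Real.rpow_natCast, ← Real.rpow_mul hT.le]
    norm_num
  · have hsum : T ^ (-(4 : ℝ) / 3 - 1) * T ^ (-(1 : ℝ) / 3) = T ^ (-(8 : ℝ) / 3) := by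
      rw [← Real.rpow_add hT]; norm_num
    rw [div_mul_eq_mul_div, eq_div_iff (by positivity)]
    linear_combination 4 * hsum

theorem stmt_7 (c : ℝ → ℝ) (B Btil : ℝ × ℝ → ℝ)
    (hB : ContDiffOn ℝ 2 B {p : ℝ × ℝ | 0 < p.2})
    (hpde : ∀ x t : ℝ, 0 < t →
      (4 / t) * pdt B (x, t) + pdt (pdt B) (x, t)
        = (c x) ^ 2 * pdx (pdx B) (x, t))
    (hBtil : ∀ x T : ℝ, 0 < T → Btil (x, T) = B (x, 3 * T ^ (-(1 : ℝ) / 3))) :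
    ∀ x T : ℝ, 0 < T →
      pdt (pdt Btil) (x, T)
        = T ^ (-(8 : ℝ) / 3) * (c x) ^ 2 * pdx (pdx Btil) (x, T) := by
  intro x T hT
  set g : ℝ → ℝ := fun s => 3 * s ^ (-(1 : ℝ) / 3)
  set f : ℝ → ℝ := fun t => B (x, t)
  have hgT : 0 < g T := by positivity
  have hf : ContDiffAt ℝ 2 f (g T) :=
    (hB.comp (contDiff_const.prodMk contDiff_id).contDiffOn fun _ hs => hs).contDiffAt
      (Ioi_mem_nhds hgT)
  have hg : ∀ᶠ s in 𝓝 T, HasDerivAt g (-1 * s ^ (-(4 : ℝ) / 3)) s := by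
    filter_upwards [Ioi_mem_nhds hT] with s hs
    exact (hasDerivAt_const_mul_rpow hs).congr_deriv (by norm_num)
  have hslice : (fun s => Btil (x, s)) =ᶠ[𝓝 T] f ∘ g := by
    filter_upwards [Ioi_mem_nhds hT] with s hs
    exact hBtil x s hs
  have hpdeT : 4 / g T * deriv f (g T) + deriv (deriv f) (g T)
      = c x ^ 2 * pdx (pdx B) (x, g T) := hpde x (g T) hgT
  obtain ⟨hg'_sq, hg''⟩ := three_mul_rpow_neg_third_derivs hT
  rw [pdt_pdt_eq_deriv_deriv hslice,
    (hasDerivAt_deriv_comp hf hg (hasDerivAt_const_mul_rpow hT)).deriv,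
    pdx_pdx_congr fun y => hBtil y T hT, hg'_sq, hg'']
  linear_combination T ^ (-(8 : ℝ) / 3) * hpdeT
end

section
/- Let c : ℝ → ℝ and let u : ℝ × ℝ → ℝ be three times continuously differentiable on {(x,t) : t > 0} and satisfy the wave equation ∂²u/∂t²(x,t) = c(x)² · ∂²u/∂x²(x,t) for all x and all t > 0. Define B : ℝ × (0,∞) → ℝ by B(x,T) = ( t · ∂u/∂t(x,t) − u(x,t) ) / t³ evaluated at t = 3 T^{−1/3}. Then B satisfies ∂²B/∂T²(x,T) = T^{−8/3} · c(x)² · ∂²B/∂x²(x,T) for all x and all T > 0. -/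
/-!
Put `v = (t uₜ - u) / t³ = t⁻¹ ∂ₜ (u / t)`. A direct computation gives
`vₜₜ + (4 / t) vₜ = (t uₜₜₜ - uₜₜ) / t³`, i.e. the transform `u ↦ v` carries `∂ₜ²` to
`∂ₜ² + (4 / t) ∂ₜ`, while by the symmetry of mixed partials it commutes with `∂ₓ`. So the wave
equation for `u` becomes `vₜₜ + (4 / t) vₜ = c² vₓₓ`. The time change `t = 3 T^(-1/3)` has
`(dt/dT)² = T^(-8/3)` and `d²t/dT² = (4 / t) T^(-8/3)`, so `B(x, T) = v(x, t(T))` satisfies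
`B_TT = T^(-8/3) c² B_xx`.
-/

open Set Filter Topology

noncomputable def waveTransform (f : ℝ → ℝ) (t : ℝ) : ℝ :=
  (t * deriv f t - f t) / t ^ 3

section OneVariable

variable {f : ℝ → ℝ} {s : Set ℝ} {t : ℝ}

lemma waveTransform_congr {g : ℝ → ℝ} (h : f =ᶠ[𝓝 t] g) :
    waveTransform f t = waveTransform g t := by
  simp only [waveTransform, h.deriv_eq, h.eq_of_nhds]

lemma waveTransform_const_mul (a : ℝ) (f : ℝ → ℝ) (t : ℝ) :
    waveTransform (fun τ => a * f τ) t = a * waveTransform f t := by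
  simp only [waveTransform, deriv_const_mul_field]
  ring

lemma contDiffOn_waveTransform {n : WithTop ℕ∞} (hs : IsOpen s) (hs₀ : ∀ τ ∈ s, τ ≠ 0)
    (hf : ContDiffOn ℝ (n + 1) f s) : ContDiffOn ℝ n (waveTransform f) s :=
  ((contDiffOn_id.mul (hf.deriv_of_isOpen hs le_rfl)).sub (hf.of_le le_self_add)).div
    (contDiffOn_id.pow 3) fun τ hτ => pow_ne_zero 3 (hs₀ τ hτ)

lemma hasDerivAt_waveTransform {a : ℝ} (ht : t ≠ 0) (hf : DifferentiableAt ℝ f t)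
    (hf' : HasDerivAt (deriv f) a t) :
    HasDerivAt (waveTransform f) ((t ^ 2 * a - 3 * t * deriv f t + 3 * f t) / t ^ 4) t := by
  have h : HasDerivAt (fun τ => (τ * deriv f τ - f τ) / τ ^ 3) _ t :=
    (((hasDerivAt_id' t).mul hf').sub hf.hasDerivAt).div (hasDerivAt_pow 3 t) (pow_ne_zero 3 ht)
  refine h.congr_deriv ?_
  simp only [Pi.sub_apply, Pi.mul_apply]
  field_simp
  ring

lemma deriv_deriv_waveTransform_add (hs : IsOpen s) (hf : ContDiffOn ℝ 3 f s) (hts : t ∈ s)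
    (ht : t ≠ 0) :
    deriv (deriv (waveTransform f)) t + 4 / t * deriv (waveTransform f) t
      = waveTransform (deriv (deriv f)) t := by
  have hf₁ := hf.deriv_of_isOpen hs (m := 2) (by norm_num)
  have hf₂ := hf₁.deriv_of_isOpen hs (m := 1) (by norm_num)
  have hdiff {g : ℝ → ℝ} {n : WithTop ℕ∞} (hg : ContDiffOn ℝ n g s) (hn : n ≠ 0) {τ : ℝ}
      (hτ : τ ∈ s) : DifferentiableAt ℝ g τ :=
    (hg.differentiableOn hn).differentiableAt (hs.mem_nhds hτ)
  have hderiv : deriv (waveTransform f) =ᶠ[𝓝 t] fun τ =>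
      (τ ^ 2 * deriv (deriv f) τ - 3 * τ * deriv f τ + 3 * f τ) / τ ^ 4 := by
    filter_upwards [hs.mem_nhds hts, isOpen_ne.mem_nhds ht] with τ hτ hτ₀
    exact (hasDerivAt_waveTransform hτ₀ (hdiff hf (by norm_num) hτ)
      (hdiff hf₁ (by norm_num) hτ).hasDerivAt).deriv
  have hderiv₂ : HasDerivAt (fun τ =>
      (τ ^ 2 * deriv (deriv f) τ - 3 * τ * deriv f τ + 3 * f τ) / τ ^ 4) _ t :=
    ((((hasDerivAt_pow 2 t).mul (hdiff hf₂ (by norm_num) hts).hasDerivAt).sub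
    (((hasDerivAt_id' t).const_mul 3).mul (hdiff hf₁ (by norm_num) hts).hasDerivAt)).add
    ((hdiff hf (by norm_num) hts).hasDerivAt.const_mul 3)).div (hasDerivAt_pow 4 t)
    (pow_ne_zero 4 ht)
  rw [hderiv.deriv_eq, hderiv₂.deriv, (hasDerivAt_waveTransform ht (hdiff hf (by norm_num) hts)
    (hdiff hf₁ (by norm_num) hts).hasDerivAt).deriv, waveTransform]
  simp only [Pi.add_apply, Pi.sub_apply, Pi.mul_apply]
  field_simp
  ring

end OneVariable

lemma deriv_deriv_comp {g σ : ℝ → ℝ} {s s' : Set ℝ} {T : ℝ} (hs : IsOpen s) (hs' : IsOpen s')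
    (hg : ContDiffOn ℝ 2 g s) (hσ : ContDiffOn ℝ 2 σ s') (hT : T ∈ s') (hσT : σ T ∈ s) :
    deriv (deriv (g ∘ σ)) T
      = deriv (deriv g) (σ T) * deriv σ T ^ 2 + deriv g (σ T) * deriv (deriv σ) T := by
  have hg' := (hg.deriv_of_isOpen hs (m := 1) le_rfl).differentiableOn one_ne_zero
  have hσ' := (hσ.deriv_of_isOpen hs' (m := 1) le_rfl).differentiableOn one_ne_zero
  have hgd := hg.differentiableOn two_ne_zero
  have hσd := hσ.differentiableOn two_ne_zero
  have hσc : ContinuousAt σ T := (hσd.differentiableAt (hs'.mem_nhds hT)).continuousAt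
  have hchain : deriv (g ∘ σ) =ᶠ[𝓝 T] fun τ => deriv g (σ τ) * deriv σ τ := by
    filter_upwards [hs'.mem_nhds hT, hσc.preimage_mem_nhds (hs.mem_nhds hσT)] with τ hτ hστ
    exact deriv_comp τ (hgd.differentiableAt (hs.mem_nhds hστ))
      (hσd.differentiableAt (hs'.mem_nhds hτ))
  have hprod : HasDerivAt (fun τ => deriv g (σ τ) * deriv σ τ) _ T :=
    (((hg'.differentiableAt (hs.mem_nhds hσT)).hasDerivAt.comp T
      (hσd.differentiableAt (hs'.mem_nhds hT)).hasDerivAt).mul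
      (hσ'.differentiableAt (hs'.mem_nhds hT)).hasDerivAt)
  rw [hchain.deriv_eq, hprod.deriv, Function.comp_apply]
  ring

noncomputable def timeChange (T : ℝ) : ℝ := 3 * T ^ (-(1 : ℝ) / 3)

section TimeChange

variable {T : ℝ}

lemma timeChange_pos (hT : 0 < T) : 0 < timeChange T := by
  unfold timeChange
  positivity

lemma contDiffOn_timeChange : ContDiffOn ℝ 2 timeChange (Ioi 0) := fun _ hτ =>
  ((Real.contDiffAt_rpow_const_of_ne (ne_of_gt hτ)).const_smul (3 : ℝ)).contDiffWithinAt

lemma hasDerivAt_timeChange (hT : 0 < T) : HasDerivAt timeChange (-T ^ (-(4 : ℝ) / 3)) T := by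
  refine ((Real.hasDerivAt_rpow_const (p := -(1 : ℝ) / 3) (Or.inl hT.ne')).const_mul
    3).congr_deriv ?_
  norm_num
  ring

lemma deriv_timeChange_sq (hT : 0 < T) : deriv timeChange T ^ 2 = T ^ (-(8 : ℝ) / 3) := by
  rw [(hasDerivAt_timeChange hT).deriv, neg_sq, ← Real.rpow_natCast, ← Real.rpow_mul hT.le]
  norm_num

lemma deriv_deriv_timeChange (hT : 0 < T) :
    deriv (deriv timeChange) T = 4 / timeChange T * T ^ (-(8 : ℝ) / 3) := by
  have h : deriv timeChange =ᶠ[𝓝 T] fun τ => -τ ^ (-(4 : ℝ) / 3) := by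
    filter_upwards [Ioi_mem_nhds hT] with τ hτ using (hasDerivAt_timeChange hτ).deriv
  have hpow : T ^ (-(7 : ℝ) / 3) * T ^ (-(1 : ℝ) / 3) = T ^ (-(8 : ℝ) / 3) := by
    rw [← Real.rpow_add hT]
    norm_num
  have hd : HasDerivAt (fun τ => -τ ^ (-(4 : ℝ) / 3)) _ T :=
    (Real.hasDerivAt_rpow_const (Or.inl hT.ne')).neg
  have hpos : 0 < T ^ (-(1 : ℝ) / 3) := by positivity
  rw [h.deriv_eq, hd.deriv, timeChange, ← hpow, show -(4 : ℝ) / 3 - 1 = -(7 : ℝ) / 3 by norm_num]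
  field_simp

end TimeChange

section PartialDerivatives

variable {g : ℝ × ℝ → ℝ} {s : Set (ℝ × ℝ)} {a b : ℝ}

lemma DifferentiableAt.hasDerivAt_pdx_s9 (h : DifferentiableAt ℝ g (a, b)) :
    HasDerivAt (fun x => g (x, b)) (pdx g (a, b)) a :=
  (h.comp a (differentiableAt_id.prodMk (differentiableAt_const b))).hasDerivAt

lemma DifferentiableAt.hasDerivAt_fderiv_fst {E : Type*} [NormedAddCommGroup E] [NormedSpace ℝ E]
    {h : ℝ × ℝ → E} (hd : DifferentiableAt ℝ h (a, b)) :
    HasDerivAt (fun x => h (x, b)) (fderiv ℝ h (a, b) (1, 0)) a :=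
  hd.hasFDerivAt.comp_hasDerivAt a ((hasDerivAt_id a).prodMk (hasDerivAt_const a b))

lemma DifferentiableAt.hasDerivAt_fderiv_snd {E : Type*} [NormedAddCommGroup E] [NormedSpace ℝ E]
    {h : ℝ × ℝ → E} (hd : DifferentiableAt ℝ h (a, b)) :
    HasDerivAt (fun t => h (a, t)) (fderiv ℝ h (a, b) (0, 1)) b :=
  hd.hasFDerivAt.comp_hasDerivAt b ((hasDerivAt_const b a).prodMk (hasDerivAt_id b))

lemma DifferentiableAt.pdx_eq_fderiv (h : DifferentiableAt ℝ g (a, b)) :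
    pdx g (a, b) = fderiv ℝ g (a, b) (1, 0) :=
  h.hasDerivAt_fderiv_fst.deriv

lemma DifferentiableAt.pdt_eq_fderiv (h : DifferentiableAt ℝ g (a, b)) :
    pdt g (a, b) = fderiv ℝ g (a, b) (0, 1) :=
  h.hasDerivAt_fderiv_snd.deriv

lemma ContDiffOn.pdx_of_isOpen {n m : WithTop ℕ∞} (hg : ContDiffOn ℝ n g s) (hs : IsOpen s)
    (hmn : m + 1 ≤ n) : ContDiffOn ℝ m (pdx g) s := by
  have hd := hg.differentiableOn (by rintro rfl; simp at hmn)
  refine ((hg.fderiv_of_isOpen hs hmn).clm_apply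
    (contDiffOn_const (c := ((1 : ℝ), (0 : ℝ))))).congr fun ⟨a, b⟩ hp => (hd.differentiableAt (hs.mem_nhds hp)).pdx_eq_fderiv

lemma ContDiffOn.pdt_of_isOpen {n m : WithTop ℕ∞} (hg : ContDiffOn ℝ n g s) (hs : IsOpen s)
    (hmn : m + 1 ≤ n) : ContDiffOn ℝ m (pdt g) s := by
  have hd := hg.differentiableOn (by rintro rfl; simp at hmn)
  refine ((hg.fderiv_of_isOpen hs hmn).clm_apply
    (contDiffOn_const (c := ((0 : ℝ), (1 : ℝ))))).congr fun ⟨a, b⟩ hp => (hd.differentiableAt (hs.mem_nhds hp)).pdt_eq_fderiv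

lemma ContDiffOn.pdx_pdt_eq_pdt_pdx (hg : ContDiffOn ℝ 2 g s) (hs : IsOpen s) (hp : (a, b) ∈ s) :
    pdx (pdt g) (a, b) = pdt (pdx g) (a, b) := by
  have hgd := hg.differentiableOn two_ne_zero
  have hD : DifferentiableAt ℝ (fderiv ℝ g) (a, b) :=
    ((hg.fderiv_of_isOpen hs (m := 1) le_rfl).differentiableOn one_ne_zero).differentiableAt
      (hs.mem_nhds hp)
  have hsymm : IsSymmSndFDerivAt ℝ g (a, b) :=
    (hg.contDiffAt (hs.mem_nhds hp)).isSymmSndFDerivAt (by simp)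
  have hslice_x : (fun x => pdt g (x, b)) =ᶠ[𝓝 a] fun x => fderiv ℝ g (x, b) (0, 1) := by
    filter_upwards [(continuous_id.prodMk continuous_const).continuousAt.preimage_mem_nhds
      (hs.mem_nhds hp)] with x hx
    exact (hgd.differentiableAt (hs.mem_nhds hx)).pdt_eq_fderiv
  have hslice_t : (fun t => pdx g (a, t)) =ᶠ[𝓝 b] fun t => fderiv ℝ g (a, t) (1, 0) := by
    filter_upwards [(continuous_const.prodMk continuous_id).continuousAt.preimage_mem_nhds
      (hs.mem_nhds hp)] with t ht
    exact (hgd.differentiableAt (hs.mem_nhds ht)).pdx_eq_fderiv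
  calc pdx (pdt g) (a, b) = fderiv ℝ (fderiv ℝ g) (a, b) (1, 0) (0, 1) := by
        rw [pdx, hslice_x.deriv_eq,
          (hD.hasDerivAt_fderiv_fst.clm_apply (hasDerivAt_const a ((0 : ℝ), (1 : ℝ)))).deriv]
        simp
    _ = fderiv ℝ (fderiv ℝ g) (a, b) (0, 1) (1, 0) := hsymm _ _
    _ = pdt (pdx g) (a, b) := by
        rw [pdt, hslice_t.deriv_eq,
          (hD.hasDerivAt_fderiv_snd.clm_apply (hasDerivAt_const b ((1 : ℝ), (0 : ℝ)))).deriv]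
        simp

end PartialDerivatives

section WaveTransformSlices

variable {g : ℝ × ℝ → ℝ} {s : Set (ℝ × ℝ)} {a b : ℝ}

lemma ContDiffOn.hasDerivAt_waveTransform_fst (hg : ContDiffOn ℝ 2 g s) (hs : IsOpen s)
    (hp : (a, b) ∈ s) :
    HasDerivAt (fun x => waveTransform (fun t => g (x, t)) b)
      (waveTransform (fun t => pdx g (a, t)) b) a := by
  have hdiff {f : ℝ × ℝ → ℝ} {n : WithTop ℕ∞} (hf : ContDiffOn ℝ n f s) (hn : n ≠ 0) :
      DifferentiableAt ℝ f (a, b) :=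
    (hf.differentiableOn hn).differentiableAt (hs.mem_nhds hp)
  have h := (((hdiff (hg.pdt_of_isOpen hs (m := 1) le_rfl) one_ne_zero).hasDerivAt_pdx_s9.const_mul
    b).sub (hdiff hg two_ne_zero).hasDerivAt_pdx_s9).div_const (b ^ 3)
  rwa [hg.pdx_pdt_eq_pdt_pdx hs hp] at h

lemma ContDiffOn.deriv_deriv_waveTransform_fst (hg : ContDiffOn ℝ 3 g s) (hs : IsOpen s)
    (hline : ∀ x, (x, b) ∈ s) :
    deriv (deriv fun x => waveTransform (fun t => g (x, t)) b) a
      = waveTransform (fun t => pdx (pdx g) (a, t)) b := by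
  have hderiv : (deriv fun x => waveTransform (fun t => g (x, t)) b)
      = fun x => waveTransform (fun t => pdx g (x, t)) b :=
    funext fun x => ((hg.of_le (by norm_num)).hasDerivAt_waveTransform_fst hs (hline x)).deriv
  rw [hderiv]
  exact ((hg.pdx_of_isOpen hs (m := 2) le_rfl).hasDerivAt_waveTransform_fst hs (hline a)).deriv

end WaveTransformSlices

theorem stmt_9 (c : ℝ → ℝ) (u B : ℝ × ℝ → ℝ)
    (hu : ContDiffOn ℝ 3 u {p : ℝ × ℝ | 0 < p.2})
    (hwave : ∀ x t : ℝ, 0 < t →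
      pdt (pdt u) (x, t) = (c x) ^ 2 * pdx (pdx u) (x, t))
    (hB : ∀ x T : ℝ, 0 < T →
      B (x, T) = (3 * T ^ (-(1 : ℝ) / 3) * pdt u (x, 3 * T ^ (-(1 : ℝ) / 3))
          - u (x, 3 * T ^ (-(1 : ℝ) / 3))) / (3 * T ^ (-(1 : ℝ) / 3)) ^ 3) :
    ∀ x T : ℝ, 0 < T →
      pdt (pdt B) (x, T)
        = T ^ (-(8 : ℝ) / 3) * (c x) ^ 2 * pdx (pdx B) (x, T) := by
  intro x T hT
  have hS : IsOpen {p : ℝ × ℝ | 0 < p.2} := isOpen_lt continuous_const continuous_snd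
  have ht := timeChange_pos hT
  set t := timeChange T
  set f := fun τ => u (x, τ)
  have hf : ContDiffOn ℝ 3 f (Ioi 0) :=
    hu.comp (contDiff_const.prodMk contDiff_id).contDiffOn fun _ hτ => hτ
  have hWf : ContDiffOn ℝ 2 (waveTransform f) (Ioi 0) :=
    contDiffOn_waveTransform isOpen_Ioi (fun _ hτ => ne_of_gt hτ) hf
  have hBt : (fun τ => B (x, τ)) =ᶠ[𝓝 T] waveTransform f ∘ timeChange := by
    filter_upwards [Ioi_mem_nhds hT] with τ hτ using hB x τ hτ
  have hBxx : pdx (pdx B) (x, T) = waveTransform (fun τ => pdx (pdx u) (x, τ)) t := by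
    show deriv (deriv fun y => B (y, T)) x = _
    rw [funext fun y => hB y T hT]
    exact hu.deriv_deriv_waveTransform_fst hS fun _ => ht
  have hwave_f : deriv (deriv f) =ᶠ[𝓝 t] fun τ => c x ^ 2 * pdx (pdx u) (x, τ) := by
    filter_upwards [Ioi_mem_nhds ht] with τ hτ using hwave x τ hτ
  calc pdt (pdt B) (x, T) = deriv (deriv (waveTransform f ∘ timeChange)) T := hBt.deriv.deriv_eq
    _ = deriv (deriv (waveTransform f)) t * deriv timeChange T ^ 2
          + deriv (waveTransform f) t * deriv (deriv timeChange) T :=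
        deriv_deriv_comp isOpen_Ioi isOpen_Ioi hWf contDiffOn_timeChange hT ht
    _ = T ^ (-(8 : ℝ) / 3)
          * (deriv (deriv (waveTransform f)) t + 4 / t * deriv (waveTransform f) t) := by
        rw [deriv_timeChange_sq hT, deriv_deriv_timeChange hT]
        ring
    _ = T ^ (-(8 : ℝ) / 3) * c x ^ 2 * pdx (pdx B) (x, T) := by
        rw [deriv_deriv_waveTransform_add isOpen_Ioi hf ht ht.ne', waveTransform_congr hwave_f,
          waveTransform_const_mul, hBxx, mul_assoc]
end

section
/- Let V : ℝ × ℝ → ℝ be twice continuously differentiable and satisfy ∂²V/∂ξ∂η(ξ,η) = 0 for all (ξ,η). Define u(x,t) = x · t · V( 1/x + 1/t, 1/x − 1/t ) for x ≠ 0, t ≠ 0. Then u satisfies the wave equation ∂²u/∂t²(x,t) = (x²/t²)² · ∂²u/∂x²(x,t) for all x ≠ 0 and all t ≠ 0. -/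
theorem pdx_eq_fderiv {V : ℝ × ℝ → ℝ} (hV : Differentiable ℝ V) :
    pdx V = fun p => fderiv ℝ V p (1, 0) := by
  funext p
  exact ((hV p).hasFDerivAt.comp_hasDerivAt p.1
    ((hasDerivAt_id p.1).prodMk (hasDerivAt_const p.1 p.2))).deriv

theorem ContDiff.pdx {V : ℝ × ℝ → ℝ} {n : WithTop ℕ∞} (hV : ContDiff ℝ (n + 1) V) :
    ContDiff ℝ n (pdx V) := by
  rw [pdx_eq_fderiv (hV.differentiable (by simp))]
  exact (hV.fderiv_right le_rfl).clm_apply contDiff_const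

theorem exists_contDiff_add_of_pdt_pdx_eq_zero {V : ℝ × ℝ → ℝ} (hV : ContDiff ℝ 2 V)
    (hVξη : ∀ ξ η, pdt (pdx V) (ξ, η) = 0) :
    ∃ F G : ℝ → ℝ, ContDiff ℝ 2 F ∧ ContDiff ℝ 2 G ∧ ∀ ξ η, V (ξ, η) = F ξ + G η := by
  have hV₁ : ContDiff ℝ 1 (pdx V) := ContDiff.pdx (n := 1) hV
  have hpdxV : ∀ ξ η, pdx V (ξ, η) = pdx V (ξ, 0) := fun ξ η =>
    is_const_of_deriv_eq_zero (f := fun η => pdx V (ξ, η))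
      (hV₁.differentiable one_ne_zero |>.comp (by fun_prop))
      (fun η => hVξη ξ η) η 0
  refine ⟨fun ξ => V (ξ, 0), fun η => V (0, η) - V (0, 0), by fun_prop, by fun_prop,
    fun ξ η => ?_⟩
  have hVd : Differentiable ℝ V := hV.differentiable two_ne_zero
  have hdiff : ∀ η, Differentiable ℝ fun ξ => V (ξ, η) := fun η => hVd.comp (by fun_prop)
  have hconst := is_const_of_deriv_eq_zero (f := fun ξ => V (ξ, η) - V (ξ, 0))
    ((hdiff η).sub (hdiff 0)) (fun ξ => by
      rw [deriv_fun_sub (hdiff η ξ) (hdiff 0 ξ)]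
      exact sub_eq_zero.2 (hpdxV ξ η)) ξ 0
  dsimp only at hconst ⊢
  linarith

theorem deriv_deriv_of_eq_mul_comp_inv {H v : ℝ → ℝ} (hH : Differentiable ℝ H) {t : ℝ}
    (hH' : DifferentiableAt ℝ (deriv H) t⁻¹) (c : ℝ) (hv : ∀ s ≠ 0, v s = c * s * H s⁻¹)
    (ht : t ≠ 0) :
    deriv (deriv v) t = c * deriv (deriv H) t⁻¹ / t ^ 3 := by
  have hv' : ∀ s ≠ 0, HasDerivAt v (c * (H s⁻¹ - s⁻¹ * deriv H s⁻¹)) s := by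
    intro s hs
    have := (((hasDerivAt_id s).mul ((hH _).hasDerivAt.comp s (hasDerivAt_inv hs))).const_mul c)
    refine (this.congr_of_eventuallyEq ?_).congr_deriv ?_
    · filter_upwards [eventually_ne_nhds hs] with τ hτ using (hv τ hτ).trans (mul_assoc _ _ _)
    · simp only [Function.comp_apply, id]; field_simp; ring
  have hv'' : HasDerivAt (fun s => c * (H s⁻¹ - s⁻¹ * deriv H s⁻¹))
      (c * deriv (deriv H) t⁻¹ / t ^ 3) t := by
    have hinv := hasDerivAt_inv ht
    refine ((((hH _).hasDerivAt.comp t hinv).sub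
      (hinv.mul (hH'.hasDerivAt.comp t hinv))).const_mul c).congr_deriv ?_
    simp only [Function.comp_apply]; field_simp; ring
  refine (hv''.congr_of_eventuallyEq ?_).deriv
  filter_upwards [eventually_ne_nhds ht] with s hs using (hv' s hs).deriv

theorem deriv_deriv_comp_affine_add {F G : ℝ → ℝ} (hF : ContDiff ℝ 2 F) (hG : ContDiff ℝ 2 G)
    (a b e d y : ℝ) :
    deriv (deriv fun z => F (a + e * z) + G (b + d * z)) y =
      e ^ 2 * deriv (deriv F) (a + e * y) + d ^ 2 * deriv (deriv G) (b + d * y) := by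
  have key : ∀ {K : ℝ → ℝ}, ContDiff ℝ 2 K → ∀ c k : ℝ,
      iteratedDeriv 2 (fun z => K (c + k * z)) y = k ^ 2 * iteratedDeriv 2 K (c + k * y) := by
    intro K hK c k
    rw [iteratedDeriv_comp_const_mul (f := fun z => K (c + z)) (by fun_prop),
      iteratedDeriv_comp_const_add]
  have h := iteratedDeriv_fun_add (n := 2) (x := y) (f := fun z => F (a + e * z))
    (g := fun z => G (b + d * z)) (by fun_prop) (by fun_prop)
  simpa only [iteratedDeriv_succ, iteratedDeriv_zero, key hF, key hG] using h

theorem stmt_11 (V u : ℝ × ℝ → ℝ) (hV : ContDiff ℝ 2 V)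
    (hVwave : ∀ ξ η : ℝ, pdt (pdx V) (ξ, η) = 0)
    (hu : ∀ x t : ℝ, x ≠ 0 → t ≠ 0 →
      u (x, t) = x * t * V (1 / x + 1 / t, 1 / x - 1 / t)) :
    ∀ x t : ℝ, x ≠ 0 → t ≠ 0 →
      pdt (pdt u) (x, t) = (x ^ 2 / t ^ 2) ^ 2 * pdx (pdx u) (x, t) := by
  obtain ⟨F, G, hF, hG, hVFG⟩ := exists_contDiff_add_of_pdt_pdx_eq_zero hV hVwave
  intro x t hx ht
  set Ht : ℝ → ℝ := fun s => F (x⁻¹ + 1 * s) + G (x⁻¹ + -1 * s)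
  set Hx : ℝ → ℝ := fun s => F (t⁻¹ + 1 * s) + G (-t⁻¹ + 1 * s)
  have hHt : ContDiff ℝ 2 Ht := by fun_prop
  have hHx : ContDiff ℝ 2 Hx := by fun_prop
  have hutt : pdt (pdt u) (x, t) = x * deriv (deriv Ht) t⁻¹ / t ^ 3 :=
    deriv_deriv_of_eq_mul_comp_inv (v := fun s => u (x, s)) (hHt.differentiable two_ne_zero)
      (hHt.differentiable_deriv_two _) x
      (fun s hs => by simp only [hu x s hx hs, hVFG, Ht]; ring_nf) ht
  have huxx : pdx (pdx u) (x, t) = t * deriv (deriv Hx) x⁻¹ / x ^ 3 :=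
    deriv_deriv_of_eq_mul_comp_inv (v := fun s => u (s, t)) (hHx.differentiable two_ne_zero)
      (hHx.differentiable_deriv_two _) t
      (fun s hs => by simp only [hu s t hs ht, hVFG, Hx]; ring_nf) hx
  rw [hutt, huxx, deriv_deriv_comp_affine_add hF hG, deriv_deriv_comp_affine_add hF hG]
  field_simp
  ring_nf
end

section
/- Let ρ > 0 and let V : ℝ × ℝ → ℝ be twice continuously differentiable and satisfy ∂²V/∂ξ∂η(ξ,η) = 0 for all (ξ,η). For x > ρ and t > ρ define ξ(x,t) = (ρ/2)·log((x−ρ)/(x+ρ)) − (ρ/2)·log((t−ρ)/(t+ρ)), η(x,t) = (ρ/2)·log((x−ρ)/(x+ρ)) + (ρ/2)·log((t−ρ)/(t+ρ)), and u(x,t) = ((x²−ρ²)(t²−ρ²))^{1/2} · V(ξ(x,t), η(x,t)). Then u satisfies the wave equation ∂²u/∂t²(x,t) = ((x²−ρ²)/(t²−ρ²))² · ∂²u/∂x²(x,t) for all x > ρ and t > ρ. -/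
/-!
Write `f y = √(y² - ρ²)` and `a y = (ρ / 2) log ((y - ρ) / (y + ρ))`, so that `a' = ρ² / f²` and
`f'' = -ρ² / f³`. For any `C²` profile `h` the first-order terms of `(f · h ∘ a)''` cancel, leaving
`(f · h ∘ a)'' = ρ² f⁻³ (ρ² h'' ∘ a - h ∘ a)`. In `t` the profile of `u` is
`q ↦ f x · V (a x - q, a x + q)`, in `x` it is `p ↦ f t · V (p - a t, p + a t)`; their second
derivatives are `V_ξξ ∓ 2 V_ξη + V_ηη`, which agree because `V_ξη = 0`. Hence
`u_tt · f(t)³ / f(x) = u_xx · f(x)³ / f(t)`, i.e. `u_tt = (f(x)² / f(t)²)² u_xx`.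
-/

open Filter Topology

noncomputable def halfLogRatio (ρ y : ℝ) : ℝ := ρ / 2 * Real.log ((y - ρ) / (y + ρ))

section OneVariable

variable {ρ y : ℝ}

theorem hasDerivAt_halfLogRatio (hρ : 0 < ρ) (hy : ρ < y) :
    HasDerivAt (halfLogRatio ρ) (ρ ^ 2 / (y ^ 2 - ρ ^ 2)) y := by
  have hm : y - ρ ≠ 0 := by linarith
  have hp : y + ρ ≠ 0 := by linarith
  have hq : HasDerivAt (fun z => (z - ρ) / (z + ρ)) (2 * ρ / (y + ρ) ^ 2) y := by
    refine (((hasDerivAt_id y).sub_const ρ).div ((hasDerivAt_id y).add_const ρ) hp).congr_deriv ?_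
    simp only [id]
    ring
  refine ((hq.log (div_ne_zero hm hp)).const_mul (ρ / 2)).congr_deriv ?_
  have hmp : y ^ 2 - ρ ^ 2 ≠ 0 := by
    rw [show y ^ 2 - ρ ^ 2 = (y - ρ) * (y + ρ) by ring]; exact mul_ne_zero hm hp
  field_simp
  ring

theorem hasDerivAt_sqrt_sq_sub_sq (hρ : 0 < ρ) (hy : ρ < y) :
    HasDerivAt (fun z => √(z ^ 2 - ρ ^ 2)) (y / √(y ^ 2 - ρ ^ 2)) y := by
  have hpos : 0 < y ^ 2 - ρ ^ 2 := by nlinarith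
  refine (((hasDerivAt_pow 2 y).sub_const (ρ ^ 2)).sqrt hpos.ne').congr_deriv ?_
  field_simp
  norm_num

variable {h h' h'' : ℝ → ℝ}

theorem hasDerivAt_sqrt_mul_comp_halfLogRatio (hρ : 0 < ρ) (hy : ρ < y)
    (hh : HasDerivAt h (h' (halfLogRatio ρ y)) (halfLogRatio ρ y)) :
    HasDerivAt (fun z => √(z ^ 2 - ρ ^ 2) * h (halfLogRatio ρ z))
      ((y * h (halfLogRatio ρ y) + ρ ^ 2 * h' (halfLogRatio ρ y)) / √(y ^ 2 - ρ ^ 2)) y := by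
  have hpos : 0 < √(y ^ 2 - ρ ^ 2) := Real.sqrt_pos.2 (by nlinarith)
  have hsq : √(y ^ 2 - ρ ^ 2) ^ 2 = y ^ 2 - ρ ^ 2 := Real.sq_sqrt (by nlinarith)
  refine ((hasDerivAt_sqrt_sq_sub_sq hρ hy).mul
    (hh.comp y (hasDerivAt_halfLogRatio hρ hy))).congr_deriv ?_
  simp only [Function.comp_apply]
  generalize √(y ^ 2 - ρ ^ 2) = f at hpos hsq ⊢
  rw [← hsq]
  field_simp

theorem deriv_deriv_sqrt_mul_comp_halfLogRatio (hρ : 0 < ρ) (hy : ρ < y)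
    (hh : ∀ p, HasDerivAt h (h' p) p) (hh' : ∀ p, HasDerivAt h' (h'' p) p) :
    deriv (deriv fun z => √(z ^ 2 - ρ ^ 2) * h (halfLogRatio ρ z)) y
      = ρ ^ 2 / √(y ^ 2 - ρ ^ 2) ^ 3
          * (ρ ^ 2 * h'' (halfLogRatio ρ y) - h (halfLogRatio ρ y)) := by
  have hfirst : (deriv fun z => √(z ^ 2 - ρ ^ 2) * h (halfLogRatio ρ z)) =ᶠ[𝓝 y]
      fun z => (z * h (halfLogRatio ρ z) + ρ ^ 2 * h' (halfLogRatio ρ z)) / √(z ^ 2 - ρ ^ 2) :=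
    eventually_of_mem (Ioi_mem_nhds hy) fun z hz =>
      (hasDerivAt_sqrt_mul_comp_halfLogRatio hρ hz (hh _)).deriv
  rw [hfirst.deriv_eq]
  have ha := hasDerivAt_halfLogRatio hρ hy
  have hpos : 0 < √(y ^ 2 - ρ ^ 2) := Real.sqrt_pos.2 (by nlinarith)
  have hsq : √(y ^ 2 - ρ ^ 2) ^ 2 = y ^ 2 - ρ ^ 2 := Real.sq_sqrt (by nlinarith)
  refine HasDerivAt.deriv ?_
  refine ((((hasDerivAt_id y).mul ((hh _).comp y ha)).add
    (((hh' _).comp y ha).const_mul (ρ ^ 2))).div (hasDerivAt_sqrt_sq_sub_sq hρ hy)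
      hpos.ne').congr_deriv ?_
  simp only [Function.comp_apply, id, Pi.mul_apply, Pi.add_apply]
  generalize √(y ^ 2 - ρ ^ 2) = f at hpos hsq ⊢
  rw [← hsq]
  field_simp
  linear_combination h (halfLogRatio ρ y) * hsq

end OneVariable

section Lines

variable {E F : Type*} [NormedAddCommGroup E] [NormedSpace ℝ E] [NormedAddCommGroup F]
  [NormedSpace ℝ F]

theorem hasDerivAt_fderiv_comp_apply {V : E → F} {γ : ℝ → E} {v : E} {s : ℝ}
    (hV : DifferentiableAt ℝ (fderiv ℝ V) (γ s)) (hγ : HasDerivAt γ v s) (w : E) :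
    HasDerivAt (fun s => fderiv ℝ V (γ s) w) (fderiv ℝ (fderiv ℝ V) (γ s) v w) s :=
  (ContinuousLinearMap.apply ℝ F w).hasFDerivAt.comp_hasDerivAt s
    (hV.hasFDerivAt.comp_hasDerivAt s hγ)

theorem ContinuousLinearMap.apply_sub_apply_sub_eq_of_cross_eq_zero (B : E →L[ℝ] E →L[ℝ] F)
    {v w : E} (hvw : B v w = 0) (hwv : B w v = 0) : B (w - v) (w - v) = B (v + w) (v + w) := by
  simp only [map_sub, map_add, sub_apply, add_apply, hvw, hwv]
  abel

theorem deriv_deriv_sqrt_mul_comp_halfLogRatio_line {ρ y : ℝ} (hρ : 0 < ρ) (hy : ρ < y)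
    {V : E → ℝ} (hV : ContDiff ℝ 2 V) {γ : ℝ → E} {v : E} (hγ : ∀ p, HasDerivAt γ v p) (c : ℝ) :
    deriv (deriv fun z => √(z ^ 2 - ρ ^ 2) * (c * V (γ (halfLogRatio ρ z)))) y
      = ρ ^ 2 / √(y ^ 2 - ρ ^ 2) ^ 3 * c
          * (ρ ^ 2 * fderiv ℝ (fderiv ℝ V) (γ (halfLogRatio ρ y)) v v
            - V (γ (halfLogRatio ρ y))) := by
  have hV1 := hV.differentiable two_ne_zero
  have hV2 := (hV.fderiv_right one_add_one_eq_two.le).differentiable one_ne_zero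
  rw [deriv_deriv_sqrt_mul_comp_halfLogRatio (h := fun p => c * V (γ p)) hρ hy
    (fun p => ((hV1 _).hasFDerivAt.comp_hasDerivAt p (hγ p)).const_mul c)
    (fun p => (hasDerivAt_fderiv_comp_apply (hV2 _) (hγ p) v).const_mul c)]
  ring

end Lines

theorem pdx_eq_fderiv_apply {g : ℝ × ℝ → ℝ} {p : ℝ × ℝ} (hg : DifferentiableAt ℝ g p) :
    pdx g p = fderiv ℝ g p (1, 0) :=
  (hg.hasFDerivAt.comp_hasDerivAt p.1
    ((hasDerivAt_id' p.1).prodMk (hasDerivAt_const p.1 p.2))).deriv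

theorem pdt_pdx_eq_fderiv_fderiv_apply {V : ℝ × ℝ → ℝ} (hV : ContDiff ℝ 2 V) (p : ℝ × ℝ) :
    pdt (pdx V) p = fderiv ℝ (fderiv ℝ V) p (0, 1) (1, 0) := by
  have hpdx : pdx V = fun q => fderiv ℝ V q (1, 0) :=
    funext fun q => pdx_eq_fderiv_apply ((hV.differentiable two_ne_zero) q)
  rw [hpdx]
  exact (hasDerivAt_fderiv_comp_apply
    ((hV.fderiv_right one_add_one_eq_two.le).differentiable one_ne_zero _)
    ((hasDerivAt_const p.2 p.1).prodMk (hasDerivAt_id' p.2)) _).deriv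

theorem fderiv_fderiv_apply_antidiag_eq_diag {V : ℝ × ℝ → ℝ} (hV : ContDiff ℝ 2 V)
    (hVwave : ∀ p, pdt (pdx V) p = 0) (p : ℝ × ℝ) :
    fderiv ℝ (fderiv ℝ V) p (-1, 1) (-1, 1) = fderiv ℝ (fderiv ℝ V) p (1, 1) (1, 1) := by
  have hsymm := hV.contDiffAt.isSymmSndFDerivAt (x := p)
    (by simp [minSmoothness_of_isRCLikeNormedField])
  have hmixed : fderiv ℝ (fderiv ℝ V) p (0, 1) (1, 0) = 0 := by
    rw [← pdt_pdx_eq_fderiv_fderiv_apply hV]; exact hVwave p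
  have hmixed' : fderiv ℝ (fderiv ℝ V) p (1, 0) (0, 1) = 0 := by rw [hsymm]; exact hmixed
  simpa using (fderiv ℝ (fderiv ℝ V) p).apply_sub_apply_sub_eq_of_cross_eq_zero hmixed' hmixed

section SeparatedSolution

variable {ρ x t : ℝ} {V u : ℝ × ℝ → ℝ}

theorem pdt_pdt_eq_of_forall_eq (hρ : 0 < ρ) (hV : ContDiff ℝ 2 V)
    (hu : ∀ x t, ρ < x → ρ < t → u (x, t) = √(x ^ 2 - ρ ^ 2) * √(t ^ 2 - ρ ^ 2)
      * V (halfLogRatio ρ x - halfLogRatio ρ t, halfLogRatio ρ x + halfLogRatio ρ t))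
    (hx : ρ < x) (ht : ρ < t) :
    pdt (pdt u) (x, t) = ρ ^ 2 / √(t ^ 2 - ρ ^ 2) ^ 3 * √(x ^ 2 - ρ ^ 2)
      * (ρ ^ 2 * fderiv ℝ (fderiv ℝ V)
          (halfLogRatio ρ x - halfLogRatio ρ t, halfLogRatio ρ x + halfLogRatio ρ t) (-1, 1) (-1, 1)
        - V (halfLogRatio ρ x - halfLogRatio ρ t, halfLogRatio ρ x + halfLogRatio ρ t)) := by
  set a := halfLogRatio ρ
  have hev : (fun τ => u (x, τ)) =ᶠ[𝓝 t]
      fun τ => √(τ ^ 2 - ρ ^ 2) * (√(x ^ 2 - ρ ^ 2) * V (a x - a τ, a x + a τ)) :=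
    eventually_of_mem (Ioi_mem_nhds ht) fun τ hτ =>
      (hu x τ hx hτ).trans (by ring)
  refine hev.deriv.deriv_eq.trans (deriv_deriv_sqrt_mul_comp_halfLogRatio_line hρ ht hV
    (γ := fun q => (a x - q, a x + q)) (fun p => ?_) _)
  exact ((hasDerivAt_const p (a x)).sub (hasDerivAt_id' p)).prodMk
    ((hasDerivAt_const p (a x)).add (hasDerivAt_id' p)) |>.congr_deriv (by simp)

theorem pdx_pdx_eq_of_forall_eq (hρ : 0 < ρ) (hV : ContDiff ℝ 2 V)
    (hu : ∀ x t, ρ < x → ρ < t → u (x, t) = √(x ^ 2 - ρ ^ 2) * √(t ^ 2 - ρ ^ 2)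
      * V (halfLogRatio ρ x - halfLogRatio ρ t, halfLogRatio ρ x + halfLogRatio ρ t))
    (hx : ρ < x) (ht : ρ < t) :
    pdx (pdx u) (x, t) = ρ ^ 2 / √(x ^ 2 - ρ ^ 2) ^ 3 * √(t ^ 2 - ρ ^ 2)
      * (ρ ^ 2 * fderiv ℝ (fderiv ℝ V)
          (halfLogRatio ρ x - halfLogRatio ρ t, halfLogRatio ρ x + halfLogRatio ρ t) (1, 1) (1, 1)
        - V (halfLogRatio ρ x - halfLogRatio ρ t, halfLogRatio ρ x + halfLogRatio ρ t)) := by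
  set a := halfLogRatio ρ
  have hev : (fun τ => u (τ, t)) =ᶠ[𝓝 x]
      fun τ => √(τ ^ 2 - ρ ^ 2) * (√(t ^ 2 - ρ ^ 2) * V (a τ - a t, a τ + a t)) :=
    eventually_of_mem (Ioi_mem_nhds hx) fun τ hτ =>
      (hu τ t hτ ht).trans (by ring)
  refine hev.deriv.deriv_eq.trans (deriv_deriv_sqrt_mul_comp_halfLogRatio_line hρ hx hV
    (γ := fun p => (p - a t, p + a t)) (fun p => ?_) _)
  exact ((hasDerivAt_id' p).sub_const (a t)).prodMk ((hasDerivAt_id' p).add_const (a t))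

end SeparatedSolution

theorem stmt_12 (ρ : ℝ) (hρ : 0 < ρ) (V u : ℝ × ℝ → ℝ) (hV : ContDiff ℝ 2 V)
    (hVwave : ∀ ξ η : ℝ, pdt (pdx V) (ξ, η) = 0)
    (hu : ∀ x t : ℝ, ρ < x → ρ < t →
      u (x, t) = Real.sqrt ((x ^ 2 - ρ ^ 2) * (t ^ 2 - ρ ^ 2)) *
        V ((ρ / 2) * Real.log ((x - ρ) / (x + ρ))
             - (ρ / 2) * Real.log ((t - ρ) / (t + ρ)),
           (ρ / 2) * Real.log ((x - ρ) / (x + ρ))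
             + (ρ / 2) * Real.log ((t - ρ) / (t + ρ)))) :
    ∀ x t : ℝ, ρ < x → ρ < t →
      pdt (pdt u) (x, t)
        = ((x ^ 2 - ρ ^ 2) / (t ^ 2 - ρ ^ 2)) ^ 2 * pdx (pdx u) (x, t) := by
  intro x t hx ht
  have hu' : ∀ x t, ρ < x → ρ < t → u (x, t) = √(x ^ 2 - ρ ^ 2) * √(t ^ 2 - ρ ^ 2)
      * V (halfLogRatio ρ x - halfLogRatio ρ t, halfLogRatio ρ x + halfLogRatio ρ t) :=
    fun x t hx ht => by rw [hu x t hx ht, Real.sqrt_mul (by nlinarith)]; rfl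
  rw [pdt_pdt_eq_of_forall_eq hρ hV hu' hx ht, pdx_pdx_eq_of_forall_eq hρ hV hu' hx ht,
    fderiv_fderiv_apply_antidiag_eq_diag hV (fun p => hVwave p.1 p.2)]
  have hfx : √(x ^ 2 - ρ ^ 2) ^ 2 = x ^ 2 - ρ ^ 2 := Real.sq_sqrt (by nlinarith)
  have hft : √(t ^ 2 - ρ ^ 2) ^ 2 = t ^ 2 - ρ ^ 2 := Real.sq_sqrt (by nlinarith)
  have hfx0 : 0 < √(x ^ 2 - ρ ^ 2) := Real.sqrt_pos.2 (by nlinarith)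
  have hft0 : 0 < √(t ^ 2 - ρ ^ 2) := Real.sqrt_pos.2 (by nlinarith)
  generalize √(x ^ 2 - ρ ^ 2) = fx at hfx hfx0 ⊢
  generalize √(t ^ 2 - ρ ^ 2) = ft at hft hft0 ⊢
  rw [← hfx, ← hft]
  field_simp
end

section
/- Let u : ℝ × ℝ → ℝ be twice continuously differentiable on {(x,t) : x > 0} and satisfy the wave equation ∂²u/∂t²(x,t) = x⁴ · ∂²u/∂x²(x,t) for all x > 0 and all t. Then there exist twice continuously differentiable functions F, G : ℝ → ℝ such that u(x,t) = x · ( F(1/x + t) + G(1/x − t) ) for all x > 0 and all t. -/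
/-!
In the characteristic coordinates `a = 1/x + t`, `b = 1/x - t` the function `w = u / x`
satisfies `w_ab = 0`. Rather than computing `w_ab`, we show that `w_a` is the Riemann invariant
`(u - x u_x + u_t / x) / 2` evaluated at `(x, t)`, and that the derivative of this invariant along
`a = const` vanishes by the wave equation and the symmetry of second derivatives. Hence `w_a`
depends on `a` alone; its primitive is `F`, and `G` is what remains of `w` on the line `a + b = 2`.
-/

open Set Filter Topology

theorem ContinuousLinearMap.apply_prod_eq {R M : Type*} [CommSemiring R] [TopologicalSpace R]
    [AddCommMonoid M] [Module R M] [TopologicalSpace M] (L : R × R →L[R] M) (a b : R) :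
    L (a, b) = a • L (1, 0) + b • L (0, 1) := by
  rw [← map_smul, ← map_smul, ← map_add]
  simp

theorem eq_of_forall_hasDerivAt_zero_Ioi {g : ℝ → ℝ} {c x y : ℝ}
    (h : ∀ z ∈ Ioi c, HasDerivAt g 0 z) (hx : x ∈ Ioi c) (hy : y ∈ Ioi c) : g x = g y :=
  isOpen_Ioi.is_const_of_deriv_eq_zero isPreconnected_Ioi
    (fun z hz => (h z hz).differentiableAt.differentiableWithinAt) (fun z hz => (h z hz).deriv)
    hx hy

section PartialDerivatives

variable {u : ℝ × ℝ → ℝ} {q : ℝ × ℝ}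

theorem pdx_eq_fderiv_s15 (hu : DifferentiableAt ℝ u q) : pdx u q = fderiv ℝ u q (1, 0) :=
  (hu.hasFDerivAt.comp_hasDerivAt q.1
    ((hasDerivAt_id q.1).prodMk (hasDerivAt_const q.1 q.2))).deriv

theorem pdt_eq_fderiv (hu : DifferentiableAt ℝ u q) : pdt u q = fderiv ℝ u q (0, 1) :=
  (hu.hasFDerivAt.comp_hasDerivAt q.2
    ((hasDerivAt_const q.2 q.1).prodMk (hasDerivAt_id q.2))).deriv

theorem hasDerivAt_fderiv_apply_comp {γ : ℝ → ℝ × ℝ} {e : ℝ × ℝ} {τ : ℝ}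
    (hu : DifferentiableAt ℝ (fderiv ℝ u) (γ τ)) (hγ : HasDerivAt γ e τ) (v : ℝ × ℝ) :
    HasDerivAt (fun σ => fderiv ℝ u (γ σ) v) (fderiv ℝ (fderiv ℝ u) (γ τ) e v) τ := by
  simpa using (hu.hasFDerivAt.comp_hasDerivAt τ hγ).clm_apply (hasDerivAt_const τ v)

theorem ContDiffAt.differentiableAt_fderiv (hu : ContDiffAt ℝ 2 u q) :
    DifferentiableAt ℝ (fderiv ℝ u) q :=
  (hu.fderiv_right (m := 1) le_rfl).differentiableAt one_ne_zero

theorem pdx_pdx_eq_fderiv_fderiv (hu : ContDiffAt ℝ 2 u q) :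
    pdx (pdx u) q = fderiv ℝ (fderiv ℝ u) q (1, 0) (1, 0) := by
  have hline : HasDerivAt (fun x => (x, q.2)) ((1 : ℝ), (0 : ℝ)) q.1 :=
    (hasDerivAt_id q.1).prodMk (hasDerivAt_const q.1 q.2)
  have hpdx : (fun x => pdx u (x, q.2)) =ᶠ[𝓝 q.1] fun x => fderiv ℝ u (x, q.2) (1, 0) :=
    (hline.continuousAt.eventually (hu.eventually (by simp))).mono
      fun x hx => pdx_eq_fderiv_s15 (hx.differentiableAt two_ne_zero)
  exact hpdx.deriv_eq.trans (hasDerivAt_fderiv_apply_comp hu.differentiableAt_fderiv hline _).deriv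

theorem pdt_pdt_eq_fderiv_fderiv (hu : ContDiffAt ℝ 2 u q) :
    pdt (pdt u) q = fderiv ℝ (fderiv ℝ u) q (0, 1) (0, 1) := by
  have hline : HasDerivAt (fun t => (q.1, t)) ((0 : ℝ), (1 : ℝ)) q.2 :=
    (hasDerivAt_const q.2 q.1).prodMk (hasDerivAt_id q.2)
  have hpdt : (fun t => pdt u (q.1, t)) =ᶠ[𝓝 q.2] fun t => fderiv ℝ u (q.1, t) (0, 1) :=
    (hline.continuousAt.eventually (hu.eventually (by simp))).mono
      fun t ht => pdt_eq_fderiv (ht.differentiableAt two_ne_zero)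
  exact hpdt.deriv_eq.trans (hasDerivAt_fderiv_apply_comp hu.differentiableAt_fderiv hline _).deriv

end PartialDerivatives

section Characteristics

variable {u : ℝ × ℝ → ℝ} {a b : ℝ}

-- Inverse of the characteristic coordinates `(x, t) ↦ (1 / x + t, 1 / x - t)`.
noncomputable def fromCharCoords (p : ℝ × ℝ) : ℝ × ℝ := (2 / (p.1 + p.2), (p.1 - p.2) / 2)

theorem fromCharCoords_charCoords {x : ℝ} (hx : x ≠ 0) (t : ℝ) :
    fromCharCoords (1 / x + t, 1 / x - t) = (x, t) := by
  simp only [fromCharCoords, Prod.mk.injEq]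
  constructor
  · field_simp; ring
  · ring

theorem fromCharCoords_fst (p : ℝ × ℝ) : (fromCharCoords p).1 = 2 / (p.1 + p.2) := rfl

theorem fromCharCoords_fst_pos (hab : 0 < a + b) : 0 < (fromCharCoords (a, b)).1 :=
  div_pos two_pos hab

theorem hasDerivAt_fromCharCoords_fst (hab : a + b ≠ 0) :
    HasDerivAt (fun a => fromCharCoords (a, b)) (-2 / (a + b) ^ 2, 1 / 2) a :=
  (((hasDerivAt_const a 2).div ((hasDerivAt_id' a).add_const b) hab).congr_deriv (by ring)).prodMk
    ((((hasDerivAt_id' a).sub_const b).div_const 2).congr_deriv (by ring))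

theorem hasDerivAt_fromCharCoords_snd (hab : a + b ≠ 0) :
    HasDerivAt (fun b => fromCharCoords (a, b)) (-2 / (a + b) ^ 2, -1 / 2) b :=
  (((hasDerivAt_const b 2).div ((hasDerivAt_id' b).const_add a) hab).congr_deriv (by ring)).prodMk
    ((((hasDerivAt_id' b).const_sub a).div_const 2).congr_deriv (by ring))

-- `u (x, t) / x` in characteristic coordinates.
noncomputable def charTransform (u : ℝ × ℝ → ℝ) (p : ℝ × ℝ) : ℝ :=
  (p.1 + p.2) / 2 * u (fromCharCoords p)

-- For `W (y, t) = y * u (1 / y, t)`, which solves `W_tt = W_yy`, this is `(W_y + W_t) / 2`.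
noncomputable def riemannInvariant (u : ℝ × ℝ → ℝ) (q : ℝ × ℝ) : ℝ :=
  (u q - q.1 * fderiv ℝ u q (1, 0) + fderiv ℝ u q (0, 1) / q.1) / 2

theorem hasDerivAt_charTransform_fst (hab : a + b ≠ 0)
    (hu : DifferentiableAt ℝ u (fromCharCoords (a, b))) :
    HasDerivAt (fun a => charTransform u (a, b))
      (riemannInvariant u (fromCharCoords (a, b))) a := by
  have hcoef : HasDerivAt (fun a => (a + b) / 2) (1 / 2) a :=
    ((hasDerivAt_id' a).add_const b).div_const 2
  have hcomp := hu.hasFDerivAt.comp_hasDerivAt a (hasDerivAt_fromCharCoords_fst hab)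
  refine (hcoef.mul hcomp).congr_deriv ?_
  rw [ContinuousLinearMap.apply_prod_eq, riemannInvariant, fromCharCoords_fst, Function.comp_apply,
    smul_eq_mul, smul_eq_mul]
  field_simp
  ring

theorem hasDerivAt_riemannInvariant_snd (hab : a + b ≠ 0)
    (hu : ContDiffAt ℝ 2 u (fromCharCoords (a, b)))
    (hwave : pdt (pdt u) (fromCharCoords (a, b)) =
      (fromCharCoords (a, b)).1 ^ 4 * pdx (pdx u) (fromCharCoords (a, b))) :
    HasDerivAt (fun b => riemannInvariant u (fromCharCoords (a, b))) 0 b := by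
  have hγ := hasDerivAt_fromCharCoords_snd hab
  have hfst : HasDerivAt (fun b => (fromCharCoords (a, b)).1) (-2 / (a + b) ^ 2) b :=
    (hasFDerivAt_fst (𝕜 := ℝ)).comp_hasDerivAt (f := fun b => fromCharCoords (a, b)) b hγ
  have hP := hasDerivAt_fderiv_apply_comp (γ := fun b => fromCharCoords (a, b))
    hu.differentiableAt_fderiv hγ (1, 0)
  have hQ := hasDerivAt_fderiv_apply_comp (γ := fun b => fromCharCoords (a, b))
    hu.differentiableAt_fderiv hγ (0, 1)
  refine ((((hu.differentiableAt two_ne_zero).hasFDerivAt.comp_hasDerivAt b hγ).sub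
    (hfst.mul hP)).add (hQ.div hfst (div_ne_zero two_ne_zero hab))).div_const 2 |>.congr_deriv ?_
  set q := fromCharCoords (a, b)
  have hsymm := hu.isSymmSndFDerivAt (by simp) (1, 0) (0, 1)
  rw [pdt_pdt_eq_fderiv_fderiv hu, pdx_pdx_eq_fderiv_fderiv hu] at hwave
  rw [ContinuousLinearMap.apply_prod_eq (fderiv ℝ u q),
    ContinuousLinearMap.apply_prod_eq (fderiv ℝ (fderiv ℝ u) q)]
  simp only [add_apply, smul_apply, smul_eq_mul, hsymm, hwave, q, fromCharCoords_fst]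
  field_simp
  ring

end Characteristics

section Regularity

theorem ContDiff.intervalIntegral_succ {f : ℝ → ℝ} {n : ℕ} (hf : ContDiff ℝ n f) (a : ℝ) :
    ContDiff ℝ (n + 1) (fun x => ∫ s in a..x, f s) := by
  refine contDiff_succ_iff_deriv.mpr ⟨fun x => ?_, by simp, ?_⟩
  · exact (hf.continuous.integral_hasStrictDerivAt a x).hasDerivAt.differentiableAt
  · rwa [funext (hf.continuous.deriv_integral f a)]

variable {u : ℝ × ℝ → ℝ}

theorem ContDiffOn.contDiffAt_of_fst_pos {n : WithTop ℕ∞} (hu : ContDiffOn ℝ n u {q | 0 < q.1})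
    {q : ℝ × ℝ} (hq : 0 < q.1) : ContDiffAt ℝ n u q :=
  hu.contDiffAt ((isOpen_lt continuous_const continuous_fst).mem_nhds hq)

theorem contDiffOn_riemannInvariant {s : Set (ℝ × ℝ)} {m n : WithTop ℕ∞} (hu : ContDiffOn ℝ n u s)
    (hs : IsOpen s) (hmn : m + 1 ≤ n) (hs0 : ∀ q ∈ s, q.1 ≠ 0) :
    ContDiffOn ℝ m (riemannInvariant u) s := by
  have hDu := hu.fderiv_of_isOpen hs hmn
  exact (((hu.of_le (le_self_add.trans hmn)).sub (contDiffOn_fst.mul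
    (hDu.clm_apply contDiffOn_const))).add ((hDu.clm_apply contDiffOn_const).div contDiffOn_fst
    hs0)).div_const 2

theorem contDiffOn_charTransform {n : WithTop ℕ∞} (hu : ContDiffOn ℝ n u {q | 0 < q.1}) :
    ContDiffOn ℝ n (charTransform u) {p | 0 < p.1 + p.2} := by
  have hsum : ContDiffOn ℝ n (fun p : ℝ × ℝ => p.1 + p.2) {p | 0 < p.1 + p.2} :=
    (contDiff_fst.add contDiff_snd).contDiffOn
  have hcoords : ContDiffOn ℝ n fromCharCoords {p | 0 < p.1 + p.2} :=
    (contDiffOn_const.div hsum fun p hp => ne_of_gt hp).prodMk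
      ((contDiff_fst.sub contDiff_snd).contDiffOn.div_const 2)
  exact (hsum.div_const 2).mul (hu.comp hcoords fun _ hp => fromCharCoords_fst_pos hp)

end Regularity

section DAlembert

variable {u : ℝ × ℝ → ℝ}

noncomputable def dAlembertF (u : ℝ × ℝ → ℝ) (a : ℝ) : ℝ :=
  ∫ s in (0 : ℝ)..a, riemannInvariant u (1, s - 1)

noncomputable def dAlembertG (u : ℝ × ℝ → ℝ) (b : ℝ) : ℝ :=
  charTransform u (2 - b, b) - dAlembertF u (2 - b)

theorem contDiff_riemannInvariant_line (hu : ContDiffOn ℝ 2 u {q | 0 < q.1}) :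
    ContDiff ℝ 1 (fun s => riemannInvariant u (1, s - 1)) := by
  have hE := contDiffOn_riemannInvariant (m := 1) hu (isOpen_lt continuous_const continuous_fst)
    (by norm_num) fun q hq => ne_of_gt hq
  have hline : ContDiff ℝ 1 fun s : ℝ => ((1 : ℝ), s - 1) :=
    contDiff_const.prodMk (contDiff_id.sub contDiff_const)
  exact contDiffOn_univ.mp <| hE.comp hline.contDiffOn fun _ _ => show (0 : ℝ) < 1 from one_pos

theorem contDiff_dAlembertF (hu : ContDiffOn ℝ 2 u {q | 0 < q.1}) :
    ContDiff ℝ 2 (dAlembertF u) :=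
  (contDiff_riemannInvariant_line hu).intervalIntegral_succ 0

theorem contDiff_dAlembertG (hu : ContDiffOn ℝ 2 u {q | 0 < q.1}) :
    ContDiff ℝ 2 (dAlembertG u) := by
  have hline : ContDiff ℝ 2 fun b : ℝ => charTransform u (2 - b, b) :=
    contDiffOn_univ.mp <| (contDiffOn_charTransform hu).comp
      ((contDiff_const.sub contDiff_id).prodMk contDiff_id).contDiffOn fun _ _ => by simp
  exact hline.sub ((contDiff_dAlembertF hu).comp (contDiff_const.sub contDiff_id))

variable (hu : ContDiffOn ℝ 2 u {q | 0 < q.1})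
  (hwave : ∀ x t : ℝ, 0 < x → pdt (pdt u) (x, t) = x ^ 4 * pdx (pdx u) (x, t))
include hu hwave

theorem riemannInvariant_fromCharCoords {a b : ℝ} (hab : 0 < a + b) :
    riemannInvariant u (fromCharCoords (a, b)) = riemannInvariant u (1, a - 1) := by
  have hconst : ∀ b' ∈ Ioi (-a),
      HasDerivAt (fun b => riemannInvariant u (fromCharCoords (a, b))) 0 b' := by
    intro b' hb'
    have hab' : 0 < a + b' := by rw [mem_Ioi] at hb'; linarith
    have hpos := fromCharCoords_fst_pos hab'
    exact hasDerivAt_riemannInvariant_snd hab'.ne' (hu.contDiffAt_of_fst_pos hpos)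
      (hwave _ _ hpos)
  have hline : fromCharCoords (a, 2 - a) = (1, a - 1) := by
    simp only [fromCharCoords, Prod.mk.injEq]
    constructor <;> ring
  rw [← hline]
  exact eq_of_forall_hasDerivAt_zero_Ioi hconst (by rw [mem_Ioi]; linarith)
    (by rw [mem_Ioi]; linarith)

theorem charTransform_eq_add {a b : ℝ} (hab : 0 < a + b) :
    charTransform u (a, b) = dAlembertF u a + dAlembertG u b := by
  have hderiv : ∀ a' ∈ Ioi (-b),
      HasDerivAt (fun a => charTransform u (a, b) - dAlembertF u a) 0 a' := by
    intro a' ha'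
    have hab' : 0 < a' + b := by rw [mem_Ioi] at ha'; linarith
    have hF : HasDerivAt (dAlembertF u) (riemannInvariant u (1, a' - 1)) a' :=
      ((contDiff_riemannInvariant_line hu).continuous.integral_hasStrictDerivAt 0 a').hasDerivAt
    have hw := hasDerivAt_charTransform_fst hab'.ne'
      ((hu.contDiffAt_of_fst_pos (fromCharCoords_fst_pos hab')).differentiableAt two_ne_zero)
    rw [riemannInvariant_fromCharCoords hu hwave hab'] at hw
    exact (hw.sub hF).congr_deriv (sub_self _)
  have h := eq_of_forall_hasDerivAt_zero_Ioi hderiv (x := a) (y := 2 - b)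
    (by rw [mem_Ioi]; linarith) (by rw [mem_Ioi]; linarith)
  rw [dAlembertG]
  linarith

end DAlembert

theorem stmt_15 (u : ℝ × ℝ → ℝ)
    (hu : ContDiffOn ℝ 2 u {p : ℝ × ℝ | 0 < p.1})
    (hwave : ∀ x t : ℝ, 0 < x →
      pdt (pdt u) (x, t) = x ^ 4 * pdx (pdx u) (x, t)) :
    ∃ F G : ℝ → ℝ, ContDiff ℝ 2 F ∧ ContDiff ℝ 2 G ∧
      ∀ x t : ℝ, 0 < x →
        u (x, t) = x * (F (1 / x + t) + G (1 / x - t)) := by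
  refine ⟨dAlembertF u, dAlembertG u, contDiff_dAlembertF hu, contDiff_dAlembertG hu,
    fun x t hx => ?_⟩
  have hab : 0 < (1 / x + t) + (1 / x - t) := by ring_nf; positivity
  rw [← charTransform_eq_add hu hwave hab, charTransform, fromCharCoords_charCoords hx.ne']
  field_simp
  ring
end

section
/- Let F, G : ℝ → ℝ be three times continuously differentiable. For x ≠ 0 and T > 0 define B(x,T) = x · T · ( F(1/x + 3 T^{−1/3}) + G(1/x − 3 T^{−1/3}) + 3 T^{−1/3} · ( G'(1/x − 3 T^{−1/3}) − F'(1/x + 3 T^{−1/3}) ) ). Then B satisfies the wave equation ∂²B/∂T²(x,T) = T^{−8/3} · x⁴ · ∂²B/∂x²(x,T) for all x ≠ 0 and all T > 0. -/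
open Filter Topology

theorem deriv_deriv_mul_comp_of_hasDerivAt_homogeneous {g ψ ψ' ψ'' : ℝ → ℝ} {a x : ℝ}
    (hx : x ≠ 0) (hg : ∀ᶠ y in 𝓝 x, HasDerivAt g (a * g y / y) y)
    (hψ : ∀ s, HasDerivAt ψ (ψ' s) s) (hψ' : ∀ s, HasDerivAt ψ' (ψ'' s) s) :
    deriv (deriv fun y => y * ψ (g y)) x
      = a * g x / x * ((1 + a) * ψ' (g x) + a * g x * ψ'' (g x)) := by
  have hfirst : deriv (fun y => y * ψ (g y)) =ᶠ[𝓝 x] fun y => ψ (g y) + a * g y * ψ' (g y) := by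
    filter_upwards [hg, eventually_ne_nhds hx] with y hgy hy
    refine ((hasDerivAt_id y).mul ((hψ (g y)).comp y hgy)).deriv.trans ?_
    simp only [Function.comp_apply, id]
    field_simp
  have hgx := hg.self_of_nhds
  rw [hfirst.deriv_eq]
  refine (((hψ (g x)).comp x hgx).add
    ((hgx.const_mul a).mul ((hψ' (g x)).comp x hgx))).deriv.trans ?_
  simp only [Function.comp_apply]
  ring

theorem eventually_hasDerivAt_one_div {x : ℝ} (hx : x ≠ 0) :
    ∀ᶠ y in 𝓝 x, HasDerivAt (fun y : ℝ => 1 / y) (-1 * (1 / y) / y) y := by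
  filter_upwards [eventually_ne_nhds hx] with y hy
  simp only [one_div]
  refine (hasDerivAt_inv hy).congr_deriv ?_
  field_simp

theorem eventually_hasDerivAt_const_mul_rpow (c a : ℝ) {x : ℝ} (hx : 0 < x) :
    ∀ᶠ y in 𝓝 x, HasDerivAt (fun y : ℝ => c * y ^ a) (a * (c * y ^ a) / y) y := by
  filter_upwards [Ioi_mem_nhds hx] with y hy
  refine ((Real.hasDerivAt_rpow_const (Or.inl (ne_of_gt hy))).const_mul c).congr_deriv ?_
  rw [Real.rpow_sub_one (ne_of_gt hy)]
  ring

theorem ContDiff.differentiable_of_three {F : ℝ → ℝ} (hF : ContDiff ℝ 3 F) :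
    Differentiable ℝ F ∧ Differentiable ℝ (deriv F) ∧ Differentiable ℝ (deriv (deriv F)) :=
  ⟨hF.differentiable (by norm_num), (hF.deriv' (n := 2)).differentiable (by norm_num),
    ((hF.deriv' (n := 2)).deriv' (n := 1)).differentiable (by norm_num)⟩

theorem hasDerivAt_mul_add_add_sub {f g : ℝ → ℝ} (hf : Differentiable ℝ f)
    (hg : Differentiable ℝ g) (u s : ℝ) :
    HasDerivAt (fun s => s * (f (u + s) + g (u - s)))
      (f (u + s) + g (u - s) + s * (deriv f (u + s) - deriv g (u - s))) s := by
  have hp : HasDerivAt (fun s => u + s) 1 s := (hasDerivAt_id s).const_add u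
  have hm : HasDerivAt (fun s => u - s) (-1) s := (hasDerivAt_id s).const_sub u
  refine ((hasDerivAt_id s).mul
    (((hf _).hasDerivAt.comp s hp).add ((hg _).hasDerivAt.comp s hm))).congr_deriv ?_
  simp only [Pi.add_apply, Function.comp_apply, id]
  ring

noncomputable def epdSolution (F G : ℝ → ℝ) (u s : ℝ) : ℝ :=
  F (u + s) + G (u - s) + s * (deriv G (u - s) - deriv F (u + s))

-- `s w_ss - 2 w_s = s w_uu`, with `w_s` from `hasDerivAt_epdSolution_snd` and `w_ss` its derivative.
theorem epdSolution_eulerPoissonDarboux (F G : ℝ → ℝ) (u s : ℝ) :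
    s * -(deriv (deriv F) (u + s) + deriv (deriv G) (u - s)
        + s * (deriv (deriv (deriv F)) (u + s) - deriv (deriv (deriv G)) (u - s)))
      - 2 * -(s * (deriv (deriv F) (u + s) + deriv (deriv G) (u - s)))
      = s * epdSolution (deriv (deriv F)) (deriv (deriv G)) u s := by
  unfold epdSolution
  ring

section epdSolution

variable {F G : ℝ → ℝ} (hF : Differentiable ℝ F) (hF' : Differentiable ℝ (deriv F))
  (hG : Differentiable ℝ G) (hG' : Differentiable ℝ (deriv G))
include hF hF' hG hG'

theorem hasDerivAt_epdSolution_fst (u s : ℝ) :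
    HasDerivAt (fun u => epdSolution F G u s) (epdSolution (deriv F) (deriv G) u s) u := by
  have hp : HasDerivAt (fun u => u + s) 1 u := (hasDerivAt_id u).add_const s
  have hm : HasDerivAt (fun u => u - s) 1 u := (hasDerivAt_id u).sub_const s
  refine (((hF _).hasDerivAt.comp u hp).add ((hG _).hasDerivAt.comp u hm)).add
    ((((hG' _).hasDerivAt.comp u hm).sub ((hF' _).hasDerivAt.comp u hp)).const_mul s)
    |>.congr_deriv ?_
  simp only [epdSolution]
  ring

theorem hasDerivAt_epdSolution_snd (u s : ℝ) :
    HasDerivAt (fun s => epdSolution F G u s)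
      (-(s * (deriv (deriv F) (u + s) + deriv (deriv G) (u - s)))) s := by
  have hp : HasDerivAt (fun s => u + s) 1 s := (hasDerivAt_id s).const_add u
  have hm : HasDerivAt (fun s => u - s) (-1) s := (hasDerivAt_id s).const_sub u
  refine (((hF _).hasDerivAt.comp s hp).add ((hG _).hasDerivAt.comp s hm)).add
    ((hasDerivAt_id s).mul (((hG' _).hasDerivAt.comp s hm).sub ((hF' _).hasDerivAt.comp s hp)))
    |>.congr_deriv ?_
  simp only [Pi.sub_apply, Function.comp_apply, id]
  ring

end epdSolution

section SecondPartials

variable {F G : ℝ → ℝ} (hF : ContDiff ℝ 3 F) (hG : ContDiff ℝ 3 G) {B : ℝ × ℝ → ℝ}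
include hF hG

theorem pdx_pdx_eq_of_eq_mul_epdSolution {T s x : ℝ}
    (hB : ∀ y, y ≠ 0 → B (y, T) = y * T * epdSolution F G (1 / y) s) (hx : x ≠ 0) :
    pdx (pdx B) (x, T)
      = T / x ^ 3 * epdSolution (deriv (deriv F)) (deriv (deriv G)) (1 / x) s := by
  obtain ⟨hF, hF', hF''⟩ := hF.differentiable_of_three
  obtain ⟨hG, hG', hG''⟩ := hG.differentiable_of_three
  have hloc : (fun y => B (y, T)) =ᶠ[𝓝 x] fun y => y * (T * epdSolution F G (1 / y) s) := by
    filter_upwards [eventually_ne_nhds hx] with y hy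
    rw [hB y hy, mul_assoc]
  refine hloc.deriv.deriv_eq.trans <| (deriv_deriv_mul_comp_of_hasDerivAt_homogeneous hx
    (eventually_hasDerivAt_one_div hx)
    (fun u => (hasDerivAt_epdSolution_fst hF hF' hG hG' u s).const_mul T)
    (fun u => (hasDerivAt_epdSolution_fst hF' hF'' hG' hG'' u s).const_mul T)).trans ?_
  ring

theorem pdt_pdt_eq_of_eq_mul_epdSolution {x T : ℝ}
    (hB : ∀ t, 0 < t → B (x, t) = x * t * epdSolution F G (1 / x) (3 * t ^ (-(1 : ℝ) / 3)))
    (hT : 0 < T) :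
    pdt (pdt B) (x, T) = (3 * T ^ (-(1 : ℝ) / 3)) ^ 2 / (9 * T) * x
      * epdSolution (deriv (deriv F)) (deriv (deriv G)) (1 / x) (3 * T ^ (-(1 : ℝ) / 3)) := by
  obtain ⟨hF, hF', hF''⟩ := hF.differentiable_of_three
  obtain ⟨hG, hG', hG''⟩ := hG.differentiable_of_three
  have hloc : (fun t => B (x, t)) =ᶠ[𝓝 T]
      fun t => t * (x * epdSolution F G (1 / x) (3 * t ^ (-(1 : ℝ) / 3))) := by
    filter_upwards [Ioi_mem_nhds hT] with t ht
    rw [hB t ht]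
    ring
  refine hloc.deriv.deriv_eq.trans <| (deriv_deriv_mul_comp_of_hasDerivAt_homogeneous hT.ne'
    (eventually_hasDerivAt_const_mul_rpow 3 (-(1 : ℝ) / 3) hT)
    (fun s => (hasDerivAt_epdSolution_snd hF hF' hG hG' (1 / x) s).const_mul x)
    (fun s => (hasDerivAt_mul_add_add_sub hF'' hG'' (1 / x) s).neg.const_mul x)).trans ?_
  linear_combination (3 * T ^ (-(1 : ℝ) / 3) * x / (9 * T)) *
    epdSolution_eulerPoissonDarboux F G (1 / x) (3 * T ^ (-(1 : ℝ) / 3))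

end SecondPartials

theorem stmt_16 (F G : ℝ → ℝ) (hF : ContDiff ℝ 3 F) (hG : ContDiff ℝ 3 G)
    (B : ℝ × ℝ → ℝ)
    (hB : ∀ x T : ℝ, x ≠ 0 → 0 < T →
      B (x, T) = x * T *
        (F (1 / x + 3 * T ^ (-(1 : ℝ) / 3)) + G (1 / x - 3 * T ^ (-(1 : ℝ) / 3))
          + 3 * T ^ (-(1 : ℝ) / 3) *
            (deriv G (1 / x - 3 * T ^ (-(1 : ℝ) / 3))
              - deriv F (1 / x + 3 * T ^ (-(1 : ℝ) / 3))))) :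
    ∀ x T : ℝ, x ≠ 0 → 0 < T →
      pdt (pdt B) (x, T)
        = T ^ (-(8 : ℝ) / 3) * x ^ 4 * pdx (pdx B) (x, T) := by
  intro x T hx hT
  have hpow : (3 * T ^ (-(1 : ℝ) / 3)) ^ 2 / (9 * T) = T ^ (-(8 : ℝ) / 3) * T := by
    rw [mul_pow, ← Real.rpow_mul_natCast hT.le, ← Real.rpow_add_one hT.ne',
      div_eq_iff (by positivity), ← mul_assoc, mul_comm _ (9 : ℝ), mul_assoc,
      ← Real.rpow_add_one hT.ne']
    norm_num
  rw [pdt_pdt_eq_of_eq_mul_epdSolution hF hG (fun t ht => hB x t hx ht) hT,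
    pdx_pdx_eq_of_eq_mul_epdSolution hF hG (fun y hy => hB y T hy hT) hx, hpow]
  field_simp
end
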